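/- arXiv:2210.10686 — 7 statements merged into one kernel-verified Lean document; each statement's English description precedes it below -/
import Mathlib

section
/- Let f be a holomorphic function on the upper half-plane, γ = [[a,b],[c,d]] ∈ SL₂(ℝ), k an integer, and m ≥ 0. Then D^m((f|_k γ)(τ)) = Σ_{r=0}^m C(m,r)·(k+r)_{m-r}·(-(1/(2πi))·c/(cτ+d))^{m-r}·((D^r f)|_{k+2r} γ)(τ), where D = (2πi)^{-1} d/dτ and (f|_k γ)(τ) = (cτ+d)^{-k} f((aτ+b)/(cτ+d)). -/
open Complex Finset

noncomputable section

/-- The normalized derivative `D = (2πi)⁻¹ d/dτ`. -/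
def Dop (f : ℂ → ℂ) : ℂ → ℂ := fun τ => (2 * ↑Real.pi * I)⁻¹ * deriv f τ

/-- Rising factorial `x (x+1) ⋯ (x+n-1)` for complex `x`. -/
def risingC (x : ℂ) (n : ℕ) : ℂ := ∏ i ∈ Finset.range n, (x + i)

/-- Weight `k` slash action of `γ = [[a,b],[c,d]]` on functions of the upper half-plane:
`(f|_k γ)(τ) = (cτ+d)^{-k} f((aτ+b)/(cτ+d))`. -/
def slash (k : ℤ) (a b c d : ℝ) (f : ℂ → ℂ) : ℂ → ℂ :=
  fun τ => ((c : ℂ) * τ + (d : ℂ)) ^ (-k) * f (((a : ℂ) * τ + (b : ℂ)) / ((c : ℂ) * τ + (d : ℂ)))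

/-! Put `u(τ) = -(2πi)⁻¹ c/(cτ+d)` and `S_r = (D^r f)|_{k+2r} γ`. Since `γ` has determinant one,
the chain rule gives `D S_r = (k+2r) u S_r + S_{r+1}`, and `D u = u²`. Hence `D^m S_0` is a
combination of the `u^{m-r} S_r`, and the coefficients satisfy the Pascal-type recursion
`A(m+1, r+1) = (k+m+r+1) A(m, r+1) + A(m, r)`, which is solved by `C(m,r) (k+r)_{m-r}`. -/

open scoped Real

lemma risingC_succ (x : ℂ) (n : ℕ) : risingC x (n + 1) = risingC x n * (x + n) :=
  prod_range_succ _ _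

lemma risingC_succ' (x : ℂ) (n : ℕ) : risingC x (n + 1) = x * risingC (x + 1) n := by
  rw [risingC, prod_range_succ', mul_comm, Nat.cast_zero, add_zero]
  exact congrArg _ (prod_congr rfl fun i _ => by push_cast; ring)

lemma choose_mul_risingC_succ_succ (K : ℂ) (m r : ℕ) :
    ((m + 1).choose (r + 1) : ℂ) * risingC (K + (r + 1 : ℕ)) (m + 1 - (r + 1)) =
      (m.choose (r + 1) : ℂ) * risingC (K + (r + 1 : ℕ)) (m - (r + 1)) *
          (K + m + (r + 1 : ℕ)) +
        (m.choose r : ℂ) * risingC (K + r) (m - r) := by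
  rcases lt_trichotomy r m with hrm | rfl | hmr
  · obtain ⟨j, rfl⟩ : ∃ j, m = r + 1 + j := ⟨m - r - 1, by omega⟩
    have hchoose :
        ((r + 1 + j).choose (r + 1) : ℂ) * (r + 1) = (r + 1 + j).choose r * (j + 1) := by
      exact_mod_cast (Nat.choose_succ_right_eq (r + 1 + j) r).trans (by congr 1; omega)
    rw [show r + 1 + j - (r + 1) = j by omega, show r + 1 + j + 1 - (r + 1) = j + 1 by omega,
      show r + 1 + j - r = j + 1 by omega, risingC_succ, risingC_succ', Nat.choose_succ_succ',
      show K + ((r + 1 : ℕ) : ℂ) = K + r + 1 by push_cast; ring]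
    push_cast
    linear_combination -risingC (K + r + 1) j * hchoose
  · simp [risingC]
  · simp [Nat.choose_eq_zero_of_lt, hmr, Nat.lt_succ_of_lt hmr]

lemma sum_choose_mul_risingC_step (K U : ℂ) (S : ℕ → ℂ) (m : ℕ) :
    ∑ r ∈ range (m + 1), (m.choose r : ℂ) * risingC (K + r) (m - r) *
        ((K + m + r) * U ^ (m - r + 1) * S r + U ^ (m - r) * S (r + 1)) =
      ∑ r ∈ range (m + 2),
        ((m + 1).choose r : ℂ) * risingC (K + r) (m + 1 - r) * U ^ (m + 1 - r) * S r := by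
  set T : ℕ → ℂ := fun r => (m.choose r : ℂ) * risingC (K + r) (m - r) * (K + m + r) *
    U ^ (m + 1 - r) * S r with hT
  have hT_last : T (m + 1) = 0 := by simp [hT]
  calc _ = ∑ r ∈ range (m + 2), T r + ∑ r ∈ range (m + 1),
        (m.choose r : ℂ) * risingC (K + r) (m - r) * U ^ (m - r) * S (r + 1) := by
        rw [sum_range_succ T, hT_last, add_zero, ← sum_add_distrib]
        refine sum_congr rfl fun r hr => ?_
        rw [show m - r + 1 = m + 1 - r by have := mem_range.1 hr; omega, hT]
        ring
    _ = _ := by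
        rw [sum_range_succ' T, sum_range_succ' _ (m + 1), add_right_comm, ← sum_add_distrib]
        congr 1
        · refine sum_congr rfl fun r hr => ?_
          rw [choose_mul_risingC_succ_succ]
          simp only [hT, Nat.add_sub_add_right]
          ring
        · simp [hT, risingC_succ]

lemma Dop_eq_of_hasDerivAt {g : ℂ → ℂ} {g' τ : ℂ} (h : HasDerivAt g (2 * π * I * g') τ) :
    Dop g τ = g' := by
  rw [Dop, h.deriv, inv_mul_cancel_left₀ two_pi_I_ne_zero]

lemma Dop_congr {g h : ℂ → ℂ} {τ : ℂ} (hgh : g =ᶠ[nhds τ] h) : Dop g τ = Dop h τ := by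
  rw [Dop, Dop, hgh.deriv_eq]

lemma DifferentiableOn.iterate_Dop {U : Set ℂ} (hU : IsOpen U) {f : ℂ → ℂ}
    (hf : DifferentiableOn ℂ f U) (r : ℕ) : DifferentiableOn ℂ (Dop^[r] f) U := by
  induction r with
  | zero => exact hf
  | succ r ih =>
    rw [Function.iterate_succ_apply']
    exact ((ih.deriv hU).const_mul _ : DifferentiableOn ℂ _ U)

lemma hasDerivAt_const_mul_pow_mul_of_riccati {e : ℂ} {u s : ℂ → ℂ} {τ s' : ℂ}
    (hu : HasDerivAt u (e * u τ ^ 2) τ) (hs : HasDerivAt s (e * s') τ) (a : ℂ) (j : ℕ) :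
    HasDerivAt (fun z => a * u z ^ j * s z)
      (e * (a * (j * u τ ^ (j + 1) * s τ + u τ ^ j * s'))) τ := by
  refine ((hu.fun_pow j).const_mul a |>.mul hs).congr_deriv ?_
  rcases j with _ | j
  · simp only [pow_zero, CharP.cast_eq_zero]
    ring
  · push_cast
    ring

theorem Dop_iterate_eq_sum_of_hasDerivAt {U : Set ℂ} (hU : IsOpen U) (K : ℂ) {u : ℂ → ℂ}
    {S : ℕ → ℂ → ℂ} (hu : ∀ τ ∈ U, HasDerivAt u (2 * π * I * u τ ^ 2) τ)
    (hS : ∀ r, ∀ τ ∈ U,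
      HasDerivAt (S r) (2 * π * I * ((K + 2 * r) * u τ * S r τ + S (r + 1) τ)) τ)
    (m : ℕ) {τ : ℂ} (hτ : τ ∈ U) :
    Dop^[m] (S 0) τ = ∑ r ∈ range (m + 1),
      (m.choose r : ℂ) * risingC (K + r) (m - r) * u τ ^ (m - r) * S r τ := by
  induction m generalizing τ with
  | zero => simp [risingC]
  | succ m ih =>
    rw [Function.iterate_succ_apply', Dop_congr (Filter.eventually_of_mem (hU.mem_nhds hτ) @ih),
      ← sum_choose_mul_risingC_step]
    refine Dop_eq_of_hasDerivAt ?_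
    rw [mul_sum]
    refine HasDerivAt.fun_sum fun r hr => ?_
    have hrm : r ≤ m := Nat.lt_succ_iff.1 (mem_range.1 hr)
    refine (hasDerivAt_const_mul_pow_mul_of_riccati (hu τ hτ) (hS r τ hτ) _ _).congr_deriv ?_
    rw [Nat.cast_sub hrm]
    ring

lemma mul_add_ne_zero_of_im_pos {a b c d : ℝ} (hdet : a * d - b * c = 1) {τ : ℂ}
    (hτ : 0 < τ.im) : (c : ℂ) * τ + d ≠ 0 := by
  have hcd : c ≠ 0 ∨ d ≠ 0 := by
    by_contra! h
    simp [h] at hdet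
  intro h
  have him : c * τ.im = 0 := by simpa using congrArg im h
  have hc : c = 0 := (mul_eq_zero.1 him).resolve_right hτ.ne'
  have hd : (d : ℂ) = 0 := by simpa [hc] using h
  exact hcd.elim (· hc) (· (by exact_mod_cast hd))

lemma im_moebius (a b c d : ℝ) (τ : ℂ) :
    (((a : ℂ) * τ + b) / ((c : ℂ) * τ + d)).im =
      (a * d - b * c) * τ.im / normSq ((c : ℂ) * τ + d) := by
  rw [div_im, div_sub_div_same]
  congr 1
  simp only [add_im, add_re, mul_re, mul_im, ofReal_re, ofReal_im]
  ring

lemma hasDerivAt_mul_add (p q τ : ℂ) : HasDerivAt (fun t => p * t + q) p τ := by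
  simpa using ((hasDerivAt_id τ).const_mul p).add_const q

lemma hasDerivAt_moebius {a b c d τ : ℂ} (hτ : c * τ + d ≠ 0) :
    HasDerivAt (fun t => (a * t + b) / (c * t + d)) ((a * d - b * c) / (c * τ + d) ^ 2) τ := by
  refine ((hasDerivAt_mul_add a b τ).fun_div (hasDerivAt_mul_add c d τ) hτ).congr_deriv ?_
  ring

lemma hasDerivAt_neg_inv_two_pi_I_mul_div {c d τ : ℂ} (hτ : c * τ + d ≠ 0) :
    HasDerivAt (fun t => -(1 / (2 * π * I)) * (c / (c * t + d)))
      (2 * π * I * (-(1 / (2 * π * I)) * (c / (c * τ + d))) ^ 2) τ := by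
  refine ((hasDerivAt_const τ c).fun_div (hasDerivAt_mul_add c d τ) hτ |>.const_mul _)
    |>.congr_deriv ?_
  field_simp [two_pi_I_ne_zero]
  ring

lemma hasDerivAt_slash {a b c d : ℝ} (hdet : a * d - b * c = 1) {τ : ℂ}
    (hτ : (c : ℂ) * τ + d ≠ 0) {F : ℂ → ℂ}
    (hF : DifferentiableAt ℂ F (((a : ℂ) * τ + b) / ((c : ℂ) * τ + d))) (K : ℤ) :
    HasDerivAt (slash K a b c d F)
      (2 * π * I * (K * (-(1 / (2 * π * I)) * (c / (c * τ + d))) * slash K a b c d F τ +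
        slash (K + 2) a b c d (Dop F) τ)) τ := by
  have hdetC : (a : ℂ) * d - b * c = 1 := by exact_mod_cast hdet
  have hzpow := (hasDerivAt_zpow (-K) _ (Or.inl hτ)).comp τ (hasDerivAt_mul_add (c : ℂ) d τ)
  refine (hzpow.mul (hF.hasDerivAt.comp τ (hasDerivAt_moebius hτ))).congr_deriv ?_
  have hneg : ((c : ℂ) * τ + d) ^ (-(K + 2)) =
      ((c : ℂ) * τ + d) ^ (-K) / ((c : ℂ) * τ + d) ^ 2 := by
    rw [neg_add, zpow_add₀ hτ, zpow_neg, div_eq_mul_inv]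
    norm_cast
  simp only [slash, Dop, hneg, hdetC, zpow_sub_one₀ hτ, Function.comp_apply]
  push_cast
  field_simp [two_pi_I_ne_zero]

lemma hasDerivAt_slash_iterate_Dop {f : ℂ → ℂ}
    (hf : DifferentiableOn ℂ f {z : ℂ | 0 < z.im}) {a b c d : ℝ} (hdet : a * d - b * c = 1)
    (k : ℤ) (r : ℕ) {τ : ℂ} (hτ : 0 < τ.im) :
    HasDerivAt (slash (k + 2 * r) a b c d (Dop^[r] f))
      (2 * π * I * ((k + 2 * r) * (-(1 / (2 * π * I)) * (c / (c * τ + d))) *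
        slash (k + 2 * r) a b c d (Dop^[r] f) τ +
          slash (k + 2 * (r + 1 : ℕ)) a b c d (Dop^[r + 1] f) τ)) τ := by
  have hH : IsOpen {z : ℂ | 0 < z.im} := continuous_im.isOpen_preimage _ isOpen_Ioi
  have hdenom := mul_add_ne_zero_of_im_pos hdet hτ
  have hmoebius : 0 < (((a : ℂ) * τ + b) / ((c : ℂ) * τ + d)).im := by
    rw [im_moebius, hdet, one_mul]
    exact div_pos hτ (normSq_pos.2 hdenom)
  convert hasDerivAt_slash hdet hdenom
    ((hf.iterate_Dop hH r).differentiableAt (hH.mem_nhds hmoebius)) (k + 2 * r) using 4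
  · push_cast; ring
  · push_cast; ring
  · exact Function.iterate_succ_apply' _ _ _

/-- Lemma (Transf1): for holomorphic `f` on the upper half-plane, `γ ∈ SL₂(ℝ)`, `k ∈ ℤ`, `m ≥ 0`,
`D^m((f|_k γ)(τ)) = Σ_{r=0}^m C(m,r)·(k+r)_{m-r}·(-(1/(2πi))·c/(cτ+d))^{m-r}·((D^r f)|_{k+2r} γ)(τ)`. -/
theorem statement1 (f : ℂ → ℂ) (hf : DifferentiableOn ℂ f {z : ℂ | 0 < z.im})
    (a b c d : ℝ) (hdet : a * d - b * c = 1) (k : ℤ) (m : ℕ) (τ : ℂ) (hτ : 0 < τ.im) :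
    Dop^[m] (slash k a b c d f) τ =
      ∑ r ∈ Finset.range (m + 1),
        (m.choose r : ℂ) * risingC ((k : ℂ) + (r : ℂ)) (m - r) *
          (-(1 / (2 * ↑Real.pi * I)) * ((c : ℂ) / ((c : ℂ) * τ + (d : ℂ)))) ^ (m - r) *
          slash (k + 2 * r) a b c d (Dop^[r] f) τ := by
  simpa using Dop_iterate_eq_sum_of_hasDerivAt (continuous_im.isOpen_preimage _ isOpen_Ioi) k
    (fun z hz => hasDerivAt_neg_inv_two_pi_I_mul_div (mul_add_ne_zero_of_im_pos hdet hz))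
    (fun r z hz => hasDerivAt_slash_iterate_Dop hf hdet k r hz) m hτ
end
end

section
/- In the universal enveloping algebra of sl₂ with generators D, W, δ satisfying [W,D] = 2D, [W,δ] = -2δ, [δ,D] = W, one has for all r, n ≥ 0: δ^r·D^n = Σ_{j=0}^r C(r,j)·(n-j+1)_j·D^{n-j}·δ^{r-j}·(W + n - r)_j, where (n-j+1)_j·D^{n-j} is interpreted as 0 if j > n, and (W+n-r)_j denotes the product (W+n-r)(W+n-r+1)···(W+n-r+j-1). -/
open Finset

/-- Rising factorial `x (x+1) ⋯ (x+n-1)` on integers. -/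
def risingZ (x : ℤ) (n : ℕ) : ℤ := ∏ i ∈ Finset.range n, (x + i)

/-- Ordered rising factorial `(x)(x+1)⋯(x+j-1)` of a ring element. -/
def opRising {A : Type*} [Ring A] (x : A) : ℕ → A
  | 0 => 1
  | j + 1 => opRising x j * (x + (j : A))


section
variable {A : Type*} [Ring A]

lemma natc (k : ℕ) (a : A) : a * (k:A) = (k:A) * a := ((Nat.cast_commute k a).eq).symm
lemma intc (z : ℤ) (a : A) : a * (z:A) = (z:A) * a := ((Int.cast_commute z a).eq).symm

lemma cpull {c : A} (hc : ∀ y : A, c * y = y * c) (a b : A) : c * (a * b) = a * (c * b) := by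
  rw [← mul_assoc, hc a, mul_assoc]

lemma natcen (m : ℕ) : ∀ y : A, ((m:A)) * y = y * ((m:A)) := fun y => (natc m y).symm

lemma natcen1 (m : ℕ) : ∀ y : A, ((m:A)+1) * y = y * ((m:A)+1) := fun y => by
  rw [add_mul, mul_add, natc, one_mul, mul_one]

lemma natcen2 (m : ℕ) : ∀ y : A, ((m:A)+1+1) * y = y * ((m:A)+1+1) := fun y => by
  rw [add_mul, mul_add, natcen1, one_mul, mul_one]

variable (D W δ : A)

lemma L_WD (h1 : W * D - D * W = 2 * D) (m : ℕ) :
    W * D ^ m = D ^ m * (W + 2 * (m:A)) := by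
  have h1' : W * D = 2 * D + D * W := sub_eq_iff_eq_add.mp h1
  induction m with
  | zero => simp
  | succ m ih =>
    rw [pow_succ, ← mul_assoc, ih, mul_assoc, mul_assoc]
    congr 1
    rw [show (W + 2*((m:A))) * D = W*D + 2*((m:A)*D) from by noncomm_ring, h1', ← natc]
    push_cast
    noncomm_ring

lemma L_Wd (h2 : W * δ - δ * W = -2 * δ) (k : ℕ) :
    W * δ ^ k = δ ^ k * (W - 2 * (k:A)) := by
  have h2' : W * δ = -2 * δ + δ * W := sub_eq_iff_eq_add.mp h2
  induction k with
  | zero => simp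
  | succ k ih =>
    rw [pow_succ, ← mul_assoc, ih, mul_assoc, mul_assoc]
    congr 1
    rw [show (W - 2*((k:A))) * δ = W*δ - 2*((k:A)*δ) from by noncomm_ring, h2', ← natc]
    push_cast
    noncomm_ring

/-- `(W + c) * δ^k = δ^k * (W + c - 2k)` for central `c`. -/
lemma L_cd (h2 : W * δ - δ * W = -2 * δ) (c : A) (hc : Commute c δ) (k : ℕ) :
    (W + c) * δ ^ k = δ ^ k * (W + c - 2 * (k:A)) := by
  rw [add_mul, L_Wd W δ h2, (hc.pow_right k).eq]
  noncomm_ring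

/-- `δ D^{m+1} = D^{m+1} δ + (m+1) D^m (W + m)`. -/
lemma L_dD1 (h1 : W * D - D * W = 2 * D) (h3 : δ * D - D * δ = W) (m : ℕ) :
    δ * D ^ (m+1) = D ^ (m+1) * δ + ((m:A)+1) * (D ^ m * (W + (m:A))) := by
  have h3' : δ * D = W + D * δ := sub_eq_iff_eq_add.mp h3
  induction m with
  | zero => simp [h3']; abel
  | succ m ih =>
    push_cast
    rw [pow_succ, ← mul_assoc, ih]
    have hWD : (W + (m:A)) * D = D * (W + (m:A) + 2) := by
      rw [add_mul, sub_eq_iff_eq_add.mp h1,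
        ← natc]
      noncomm_ring
    rw [add_mul, mul_assoc, h3', mul_assoc, mul_assoc, hWD,
      show D^m * (D*(W+(m:A)+2)) = D^(m+1)*(W+(m:A)+2) from by rw [pow_succ, mul_assoc]]
    calc D ^ (m+1) * (W + D * δ) + ((m:A)+1) * (D ^ (m+1) * (W + (m:A) + 2))
        = D^(m+1) * (D * δ) + D^(m+1) * (W + ((m:A)+1) * (W + (m:A) + 2)) := by
          rw [cpull (natcen1 m)]
          noncomm_ring
      _ = D^(m+1) * (D * δ) + D^(m+1) * (((m:A)+1+1) * (W + ((m:A)+1))) := by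
          congr 2
          noncomm_ring
      _ = D ^ (m+1) * D * δ + ((m:A)+1+1) * (D ^ (m+1) * (W + ((m:A)+1))) := by
          rw [← cpull (natcen2 m), ← mul_assoc]

end

section
variable {A : Type*} [Ring A]

lemma L_dD (D W δ : A) (h1 : W * D - D * W = 2 * D) (h3 : δ * D - D * δ = W) (m : ℕ) :
    δ * D ^ m = D ^ m * δ + ((m:A)) * (D ^ (m-1) * (W + (m:A) - 1)) := by
  cases m with
  | zero => simp
  | succ m =>
    have h := L_dD1 D W δ h1 h3 m
    have e : W + ((m:A)+1) - 1 = W + (m:A) := by abel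
    push_cast
    simpa [e] using h

lemma opRising_succ_left (x : A) (s : ℕ) : opRising x (s+1) = x * opRising (x+1) s := by
  induction s with
  | zero => simp [opRising]
  | succ s ih =>
    rw [show opRising x (s+1+1) = opRising x (s+1) * (x + ((s+1 : ℕ):A)) from rfl, ih, mul_assoc]
    congr 1
    rw [show opRising (x+1) (s+1) = opRising (x+1) s * ((x+1) + ((s:ℕ):A)) from rfl]
    congr 1
    push_cast
    abel

lemma commute_opRising (y x : A) (h : Commute y x) (s : ℕ) : Commute y (opRising x s) := by
  induction s with
  | zero => exact Commute.one_right y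
  | succ s ih => exact ih.mul_right (h.add_right (Nat.commute_cast y s))

end

lemma risingZ_succ_left (x : ℤ) (s : ℕ) : risingZ x (s+1) = x * risingZ (x+1) s := by
  rw [risingZ, Finset.prod_range_succ', risingZ]
  push_cast
  rw [Finset.prod_congr rfl (fun i _ => by ring : ∀ i ∈ Finset.range s, x + (↑i+1) = (x+1) + ↑i)]
  ring

lemma risingZ_neg_zero (k j : ℕ) (h : k < j) : risingZ (-(k:ℤ)) j = 0 :=
  Finset.prod_eq_zero (Finset.mem_range.mpr h) (by push_cast; ring)

section
variable {A : Type*} [Ring A]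

lemma intcen (z : ℤ) : ∀ y : A, ((z:A)) * y = y * ((z:A)) := fun y => (intc z y).symm

lemma pull2 {c d : A} (hc : ∀ y:A, c*y=y*c) (hd : ∀ y:A, d*y=y*d) (P Q X : A) :
    c * (d * (P * (Q * X))) = P * (Q * (c * (d * X))) := by
  rw [cpull hd P, cpull hc P, cpull hd Q, cpull hc Q]

lemma pull3 {c d e : A} (hc : ∀ y:A, c*y=y*c) (hd : ∀ y:A, d*y=y*d) (he : ∀ y:A, e*y=y*e)
    (P Q X : A) :
    c * (d * (e * (P * (Q * X)))) = P * (Q * (c * (d * (e * X)))) := by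
  rw [cpull he P, cpull hd P, cpull hc P, cpull he Q, cpull hd Q, cpull hc Q]

lemma keyid (W : A) (n r s : ℕ) (hs : s ≤ r) :
    (((r+1).choose (s+1)) : A) * ((risingZ ((n:ℤ) - (↑(s+1):ℤ) + 1) (s+1) : ℤ) : A) *
        opRising (W + (n:A) - (r:A) - 1) (s+1)
    = ((r.choose (s+1)) : A) * ((risingZ ((n:ℤ) - (↑(s+1):ℤ) + 1) (s+1) : ℤ) : A) *
        opRising (W + (n:A) - (r:A)) (s+1)
    + ((r.choose s) : A) * ((risingZ ((n:ℤ) - (s:ℤ) + 1) s : ℤ) : A) * (((n-s:ℕ)) : A) *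
        ((W + ((n-s:ℕ):A) - 1 - 2*((r-s:ℕ):A)) * opRising (W + (n:A) - (r:A)) s) := by
  by_cases hn : n ≤ s
  · -- all terms vanish
    have hz1 : risingZ ((n:ℤ) - (↑(s+1):ℤ) + 1) (s+1) = 0 := by
      have harg : (n:ℤ) - (↑(s+1):ℤ) + 1 = -(((s-n:ℕ)):ℤ) := by
        rw [Nat.cast_sub hn]; push_cast; ring
      rw [harg]; exact risingZ_neg_zero _ _ (by omega)
    rcases eq_or_lt_of_le hn with heq | hlt
    · subst heq
      rw [hz1]
      simp
    · have hz2 : risingZ ((n:ℤ) - (s:ℤ) + 1) s = 0 := by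
        have harg : (n:ℤ) - (s:ℤ) + 1 = -(((s-n-1:ℕ)):ℤ) := by
          rw [Nat.cast_sub (by omega), Nat.cast_sub (by omega : n ≤ s)]; push_cast; ring
        rw [harg]; exact risingZ_neg_zero _ _ (by omega)
      rw [hz1, hz2]
      simp
  · push_neg at hn   -- s < n
    set x : A := W + (n:A) - (r:A) - 1 with hxdef
    have hx1 : W + (n:A) - (r:A) = x + 1 := by rw [hxdef]; abel
    set R : A := opRising (x+1) s with hRdef
    have hR1 : opRising x (s+1) = x * R := opRising_succ_left x s
    have hR2 : opRising (x+1) (s+1) = (x + 1 + (s:A)) * R := by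
      have hcom : Commute ((x+1) + (s:A)) (opRising (x+1) s) :=
        commute_opRising _ _ ((Commute.refl (x+1)).add_left (Nat.cast_commute s (x+1))) s
      rw [show opRising (x+1) (s+1) = opRising (x+1) s * ((x+1) + ((s:ℕ):A)) from rfl]
      exact hcom.eq.symm
    have hL : W + ((n-s:ℕ):A) - 1 - 2*((r-s:ℕ):A) = x + ((s:A) - (r:A)) := by
      rw [Nat.cast_sub hn.le, Nat.cast_sub hs, hxdef]
      noncomm_ring
    rw [hx1, hR1, hR2, hL, Nat.cast_sub hn.le]
    -- integer coefficient identities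
    set zρj : ℤ := risingZ ((n:ℤ) - (↑(s+1):ℤ) + 1) (s+1) with hzj
    set zρs : ℤ := risingZ ((n:ℤ) - (s:ℤ) + 1) s with hzs
    have f1 : zρj = ((n:ℤ) - s) * zρs := by
      rw [hzj, hzs, show (n:ℤ) - (↑(s+1):ℤ) + 1 = (n:ℤ) - s by push_cast; ring,
        risingZ_succ_left]
    have hchoose : ((r+1).choose (s+1) : ℤ) = (r.choose (s+1) : ℤ) + (r.choose s : ℤ) := by
      rw [Nat.choose_succ_succ']
      push_cast
      ring
    have hc2 : ((r.choose (s+1)) : ℤ) * ((s:ℤ)+1) = (r.choose s : ℤ) * ((r:ℤ) - s) := by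
      have h := Nat.choose_succ_right_eq r s
      have h' : ((r.choose (s+1) * (s+1) : ℕ) : ℤ) = ((r.choose s * (r-s) : ℕ) : ℤ) := by
        exact_mod_cast congrArg (Nat.cast : ℕ → ℤ) h
      push_cast [Nat.cast_sub hs] at h'
      linarith [h']
    have I1 : (((r+1).choose (s+1) : ℤ) * zρj)
        = ((r.choose (s+1) : ℤ) * zρj) + ((r.choose s : ℤ) * zρs * ((n:ℤ) - s)) := by
      rw [f1, hchoose]; ring
    have I2 : ((r.choose (s+1) : ℤ) * zρj) * (1 + (s:ℤ))
        + ((r.choose s : ℤ) * zρs * ((n:ℤ) - s)) * ((s:ℤ) - (r:ℤ)) = 0 := by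
      rw [f1]
      linear_combination ((n:ℤ) - s) * zρs * hc2
    -- A-level versions
    have J1 : (((r+1).choose (s+1)) : A) * ((zρj : ℤ) : A)
        = ((r.choose (s+1)) : A) * ((zρj : ℤ) : A)
          + ((r.choose s) : A) * ((zρs : ℤ) : A) * ((n:A) - (s:A)) := by
      calc (((r+1).choose (s+1)) : A) * ((zρj : ℤ) : A)
          = (((((r+1).choose (s+1) : ℤ)) * zρj : ℤ) : A) := by push_cast; noncomm_ring
        _ = ((((r.choose (s+1) : ℤ) * zρj) + ((r.choose s : ℤ) * zρs * ((n:ℤ) - s)) : ℤ) : A) := by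
            rw [I1]
        _ = ((r.choose (s+1)) : A) * ((zρj : ℤ) : A)
            + ((r.choose s) : A) * ((zρs : ℤ) : A) * ((n:A) - (s:A)) := by push_cast; noncomm_ring
    have J2 : ((r.choose (s+1)) : A) * ((zρj : ℤ) : A) * (1 + (s:A))
        + ((r.choose s) : A) * ((zρs : ℤ) : A) * ((n:A) - (s:A)) * ((s:A) - (r:A)) = 0 := by
      calc ((r.choose (s+1)) : A) * ((zρj : ℤ) : A) * (1 + (s:A))
            + ((r.choose s) : A) * ((zρs : ℤ) : A) * ((n:A) - (s:A)) * ((s:A) - (r:A))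
          = (((((r.choose (s+1) : ℤ) * zρj) * (1 + (s:ℤ))
              + ((r.choose s : ℤ) * zρs * ((n:ℤ) - s)) * ((s:ℤ) - (r:ℤ))) : ℤ) : A) := by
            push_cast; noncomm_ring
        _ = 0 := by rw [I2]; exact Int.cast_zero
    have expand2 : (x + 1 + (s:A)) * R = x * R + (1 + (s:A)) * R := by noncomm_ring
    have expand3 : (x + ((s:A) - (r:A))) * R = x * R + ((s:A) - (r:A)) * R := by noncomm_ring
    rw [expand2, expand3, J1]
    have expand4 : ((r.choose (s+1)) : A) * ((zρj : ℤ) : A) * (x * R + (1 + (s:A)) * R)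
        + ((r.choose s) : A) * ((zρs : ℤ) : A) * ((n:A) - (s:A)) * (x * R + ((s:A) - (r:A)) * R)
        = (((r.choose (s+1)) : A) * ((zρj : ℤ) : A)
            + ((r.choose s) : A) * ((zρs : ℤ) : A) * ((n:A) - (s:A))) * (x * R)
          + (((r.choose (s+1)) : A) * ((zρj : ℤ) : A) * (1 + (s:A))
              + ((r.choose s) : A) * ((zρs : ℤ) : A) * ((n:A) - (s:A)) * ((s:A) - (r:A))) * R := by
      noncomm_ring
    rw [expand4, J2, zero_mul, add_zero]

end

section
variable {A : Type*} [Ring A]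

/-- summand of the target sum at level `r+1` (right-associated), `tA` variant with `r.choose`. -/
def tA (D W δ : A) (n r j : ℕ) : A :=
  (r.choose j : A) * (((risingZ ((n:ℤ) - (j:ℤ) + 1) j : ℤ) : A) *
    (D ^ (n-j) * (δ ^ (r+1-j) * opRising (W + (n:A) - (r:A)) j)))

def tB (D W δ : A) (n r j : ℕ) : A :=
  (r.choose j : A) * (((risingZ ((n:ℤ) - (j:ℤ) + 1) j : ℤ) : A) *
    (((n-j:ℕ) : A) * (D ^ (n-j-1) * (δ ^ (r-j) *
      ((W + ((n-j:ℕ):A) - 1 - 2*((r-j:ℕ):A)) * opRising (W + (n:A) - (r:A)) j)))))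

lemma core (D W δ : A) (h1 : W * D - D * W = 2 * D) (h2 : W * δ - δ * W = -2 * δ)
    (h3 : δ * D - D * δ = W) (m k : ℕ) (X : A) :
    δ * (D^m * (δ^k * X))
      = D^m * (δ^(k+1) * X) + (m:A) * (D^(m-1) * (δ^k * ((W + (m:A) - 1 - 2*(k:A)) * X))) := by
  have hLcd : (W + (m:A) - 1) * δ^k = δ^k * (W + (m:A) - 1 - 2*(k:A)) := by
    have hc : Commute ((m:A) - 1) δ := (Nat.cast_commute m δ).sub_left (Commute.one_left δ)
    have h := L_cd W δ h2 ((m:A) - 1) hc k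
    rw [add_sub_assoc] at h ⊢
    rw [h]
    congr 1
    abel
  rw [← mul_assoc, L_dD D W δ h1 h3 m, add_mul, mul_assoc]
  congr 1
  · rw [← mul_assoc δ, ← pow_succ']
  · rw [mul_assoc]
    congr 1
    conv_lhs => rw [mul_assoc, ← mul_assoc (W + (m:A) - 1), hLcd, mul_assoc]

lemma expand_delta (D W δ : A) (h1 : W * D - D * W = 2 * D) (h2 : W * δ - δ * W = -2 * δ)
    (h3 : δ * D - D * δ = W) (n r j : ℕ) (hj : j ≤ r) :
    δ * ((r.choose j : A) * (((risingZ ((n:ℤ) - (j:ℤ) + 1) j : ℤ) : A) *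
        (D ^ (n-j) * (δ ^ (r-j) * opRising (W + (n:A) - (r:A)) j))))
      = tA D W δ n r j + tB D W δ n r j := by
  rw [← cpull (natcen (r.choose j)) δ, ← cpull (intcen (risingZ ((n:ℤ) - (j:ℤ) + 1) j)) δ,
    core D W δ h1 h2 h3 (n-j) (r-j) _, show r-j+1 = r+1-j by omega, tA, tB, mul_add, mul_add]

lemma pointwise (D W δ : A) (n r s : ℕ) (hs : s ≤ r) :
    (((r+1).choose (s+1) : ℕ) : A) * (((risingZ ((n:ℤ) - ((s+1:ℕ):ℤ) + 1) (s+1) : ℤ) : A) *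
      (D ^ (n-(s+1)) * (δ ^ (r+1-(s+1)) * opRising (W + (n:A) - ((r+1:ℕ):A)) (s+1))))
    = tA D W δ n r (s+1) + tB D W δ n r s := by
  have hb : W + (n:A) - ((r+1:ℕ):A) = W + (n:A) - (r:A) - 1 := by push_cast; abel
  rw [tA, tB, hb, Nat.succ_sub_succ, show n-(s+1) = n-s-1 from by omega]
  have K := keyid W n r s hs
  simp only [mul_assoc] at K
  calc (((r+1).choose (s+1) : ℕ) : A) * (((risingZ ((n:ℤ) - ((s+1:ℕ):ℤ) + 1) (s+1) : ℤ) : A) *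
      (D ^ (n-s-1) * (δ ^ (r-s) * opRising (W + (n:A) - (r:A) - 1) (s+1))))
      = D ^ (n-s-1) * (δ ^ (r-s) * ((((r+1).choose (s+1) : ℕ) : A) *
          (((risingZ ((n:ℤ) - ((s+1:ℕ):ℤ) + 1) (s+1) : ℤ) : A) *
            opRising (W + (n:A) - (r:A) - 1) (s+1)))) :=
        pull2 (natcen _) (intcen _) _ _ _
    _ = D ^ (n-s-1) * (δ ^ (r-s) * (((r.choose (s+1) : ℕ) : A) *
          (((risingZ ((n:ℤ) - ((s+1:ℕ):ℤ) + 1) (s+1) : ℤ) : A) *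
            opRising (W + (n:A) - (r:A)) (s+1))
        + ((r.choose s : ℕ) : A) * (((risingZ ((n:ℤ) - (s:ℤ) + 1) s : ℤ) : A) *
          (((n-s:ℕ) : A) * ((W + ((n-s:ℕ):A) - 1 - 2*((r-s:ℕ):A)) *
            opRising (W + (n:A) - (r:A)) s))))) := by rw [K]
    _ = ((r.choose (s+1) : ℕ) : A) * (((risingZ ((n:ℤ) - ((s+1:ℕ):ℤ) + 1) (s+1) : ℤ) : A) *
          (D ^ (n-s-1) * (δ ^ (r-s) * opRising (W + (n:A) - (r:A)) (s+1))))
        + ((r.choose s : ℕ) : A) * (((risingZ ((n:ℤ) - (s:ℤ) + 1) s : ℤ) : A) *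
          (((n-s:ℕ) : A) * (D ^ (n-s-1) * (δ ^ (r-s) *
            ((W + ((n-s:ℕ):A) - 1 - 2*((r-s:ℕ):A)) * opRising (W + (n:A) - (r:A)) s))))) := by
        rw [mul_add, mul_add, pull2 (natcen (r.choose (s+1))) (intcen _),
          pull3 (natcen (r.choose s)) (intcen _) (natcen (n-s))]

end

section
variable {A : Type*} [Ring A]

def tF (D W δ : A) (n r j : ℕ) : A :=
  (r.choose j : A) * (((risingZ ((n:ℤ) - (j:ℤ) + 1) j : ℤ) : A) *
    (D ^ (n-j) * (δ ^ (r-j) * opRising (W + (n:A) - (r:A)) j)))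

lemma pointwise' (D W δ : A) (n r s : ℕ) (hs : s ≤ r) :
    tF D W δ n (r+1) (s+1) = tA D W δ n r (s+1) + tB D W δ n r s :=
  pointwise D W δ n r s hs

lemma tA_top (D W δ : A) (n r : ℕ) : tA D W δ n r (r+1) = 0 := by
  simp [tA, Nat.choose_succ_self]

lemma tA_zero (D W δ : A) (n r : ℕ) : tA D W δ n r 0 = tF D W δ n (r+1) 0 := by
  simp [tA, tF, risingZ, opRising]

theorem statement4' (D W δ : A)
    (h1 : W * D - D * W = 2 * D) (h2 : W * δ - δ * W = -2 * δ) (h3 : δ * D - D * δ = W)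
    (r n : ℕ) :
    δ ^ r * D ^ n = ∑ j ∈ Finset.range (r + 1), tF D W δ n r j := by
  induction r with
  | zero => simp [tF, risingZ, opRising]
  | succ r IH =>
    rw [pow_succ', mul_assoc, IH, Finset.mul_sum]
    calc ∑ j ∈ Finset.range (r+1), δ * tF D W δ n r j
        = ∑ j ∈ Finset.range (r+1), (tA D W δ n r j + tB D W δ n r j) := by
          refine Finset.sum_congr rfl fun j hj => ?_
          have hj' : j ≤ r := Nat.lt_succ_iff.mp (Finset.mem_range.mp hj)
          simp only [tF]
          exact expand_delta D W δ h1 h2 h3 n r j hj'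
      _ = (∑ j ∈ Finset.range (r+1), tA D W δ n r j)
          + ∑ j ∈ Finset.range (r+1), tB D W δ n r j := Finset.sum_add_distrib
      _ = ((∑ i ∈ Finset.range r, tA D W δ n r (i+1)) + tA D W δ n r 0)
          + ∑ j ∈ Finset.range (r+1), tB D W δ n r j := by rw [Finset.sum_range_succ']
      _ = ((∑ i ∈ Finset.range (r+1), tA D W δ n r (i+1)) + tA D W δ n r 0)
          + ∑ j ∈ Finset.range (r+1), tB D W δ n r j := by
            rw [Finset.sum_range_succ (fun i => tA D W δ n r (i+1)) r, tA_top, add_zero]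
      _ = (∑ i ∈ Finset.range (r+1), (tA D W δ n r (i+1) + tB D W δ n r i))
          + tA D W δ n r 0 := by rw [Finset.sum_add_distrib]; abel
      _ = (∑ i ∈ Finset.range (r+1), tF D W δ n (r+1) (i+1)) + tF D W δ n (r+1) 0 := by
            rw [tA_zero]
            congr 1
            refine Finset.sum_congr rfl fun i hi => ?_
            exact (pointwise' D W δ n r i (Nat.lt_succ_iff.mp (Finset.mem_range.mp hi))).symm
      _ = ∑ j ∈ Finset.range (r+1+1), tF D W δ n (r+1) j :=
            (Finset.sum_range_succ' (fun j => tF D W δ n (r+1) j) (r+1)).symm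

end

/-- In any associative algebra with `D, W, δ` satisfying the `sl₂` relations
`[W,D] = 2D`, `[W,δ] = -2δ`, `[δ,D] = W`, one has for all `r, n ≥ 0`:
`δ^r·D^n = Σ_{j=0}^r C(r,j)·(n-j+1)_j·D^{n-j}·δ^{r-j}·(W+n-r)_j`,
where `(n-j+1)_j` (computed in `ℤ`) is `0` when `j > n`, and
`(W+n-r)_j = (W+n-r)(W+n-r+1)⋯(W+n-r+j-1)`. -/
theorem statement4 {A : Type*} [Ring A] (D W δ : A)
    (h1 : W * D - D * W = 2 * D) (h2 : W * δ - δ * W = -2 * δ) (h3 : δ * D - D * δ = W)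
    (r n : ℕ) :
    δ ^ r * D ^ n =
      ∑ j ∈ Finset.range (r + 1),
        (r.choose j : A) * ((risingZ ((n : ℤ) - (j : ℤ) + 1) j : ℤ) : A) *
          D ^ (n - j) * δ ^ (r - j) * opRising (W + (n : A) - (r : A)) j := by
  rw [statement4' D W δ h1 h2 h3 r n]
  exact Finset.sum_congr rfl fun j _ => by simp only [tF, mul_assoc]
end

section
/- For integers X and m ≥ 1, Σ_{j=0}^m (X - 2j)·C(X,j)·C(2m-X, m-j) = 0, where C(a,b) denotes the (generalized) binomial coefficient a(a-1)···(a-b+1)/b!. Equivalently, X·(C(2m,m) - 2·C(2m-1,m-1)) = 0. -/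
/-!
Chu–Vandermonde gives `∑ C(X,j) C(2m-X,m-j) = C(2m,m)` and, after the absorption
`j C(X,j) = X C(X-1,j-1)`, also `∑ j C(X,j) C(2m-X,m-j) = X C(2m-1,m-1)`. So the sum is
`X (C(2m,m) - 2 C(2m-1,m-1))`, which vanishes because `C(2m,m) = C(2m-1,m-1) + C(2m-1,m)` and
the two summands agree by symmetry.
-/

open Finset

def genChoose (a : ℚ) (b : ℕ) : ℚ := (∏ i ∈ Finset.range b, (a - i)) / b.factorial

theorem genChoose_eq_choose (a : ℚ) (b : ℕ) : genChoose a b = Ring.choose a b := by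
  rw [Ring.choose_eq_smul, ← Polynomial.aeval_eq_smeval, Polynomial.aeval_def,
    Polynomial.eval₂_eq_eval_map, descPochhammer_map, descPochhammer_eval_eq_prod_range, genChoose,
    smul_eq_mul, div_eq_inv_mul]

namespace Ring

variable {R : Type*} [CommRing R] [BinomialRing R]

theorem sum_range_choose_mul_choose (r s : R) (n : ℕ) :
    ∑ j ∈ range (n + 1), choose r j * choose s (n - j) = choose (r + s) n := by
  rw [add_choose_eq n (Commute.all r s), Nat.sum_antidiagonal_eq_sum_range_succ_mk]

theorem succ_mul_choose_succ (r : R) (k : ℕ) :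
    (k + 1 : R) * choose r (k + 1) = r * choose (r - 1) k := by
  simpa [choose_one_right, nsmul_eq_mul] using choose_smul_choose r (Nat.le_add_left 1 k)

theorem sum_range_mul_choose_mul_choose (r s : R) (n : ℕ) :
    ∑ j ∈ range (n + 2), (j : R) * (choose r j * choose s (n + 1 - j)) =
      r * choose (r + s - 1) n := by
  rw [sum_range_succ', Nat.cast_zero, zero_mul, add_zero, ← sub_add_eq_add_sub,
    ← sum_range_choose_mul_choose, mul_sum]
  refine sum_congr rfl fun j _ => ?_
  rw [Nat.add_sub_add_right, ← mul_assoc, Nat.cast_succ, succ_mul_choose_succ, mul_assoc]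

end Ring

theorem Nat.choose_two_mul_succ_self (n : ℕ) :
    (2 * (n + 1)).choose (n + 1) = 2 * (2 * n + 1).choose n := by
  rw [show 2 * (n + 1) = 2 * n + 1 + 1 by ring, Nat.choose_succ_succ, Nat.choose_symm_half]
  ring

/-- For integers `X` and `m ≥ 1`, `Σ_{j=0}^m (X - 2j)·C(X,j)·C(2m-X, m-j) = 0`, where
`C(a,b)` is the generalized binomial coefficient. -/
theorem statement8 (X : ℤ) (m : ℕ) (hm : 1 ≤ m) :
    ∑ j ∈ Finset.range (m + 1),
      ((X : ℚ) - 2 * (j : ℚ)) * genChoose (X : ℚ) j * genChoose (2 * (m : ℚ) - (X : ℚ)) (m - j)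
      = 0 := by
  obtain ⟨n, rfl⟩ := Nat.exists_eq_add_of_le' hm
  set x : ℚ := (X : ℚ)
  set y : ℚ := 2 * ((n + 1 : ℕ) : ℚ) - x
  have hsplit : ∀ j : ℕ, (x - 2 * j) * Ring.choose x j * Ring.choose y (n + 1 - j) =
      x * (Ring.choose x j * Ring.choose y (n + 1 - j)) -
        2 * (j * (Ring.choose x j * Ring.choose y (n + 1 - j))) := fun j => by ring
  have hsum : x + y = ((2 * (n + 1) : ℕ) : ℚ) := by push_cast [y]; ring
  have hsum_pred : x + y - 1 = ((2 * n + 1 : ℕ) : ℚ) := by push_cast [y]; ring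
  simp only [genChoose_eq_choose, hsplit, sum_sub_distrib, ← mul_sum,
    Ring.sum_range_choose_mul_choose, Ring.sum_range_mul_choose_mul_choose]
  rw [hsum_pred, hsum, Ring.choose_natCast, Ring.choose_natCast, Nat.choose_two_mul_succ_self]
  push_cast
  ring
end

section
/- For integers ℓ ≥ 1 and parameters K, m, p (in a field of characteristic 0 with all denominators nonzero), Σ_{t=0}^ℓ (-1)^t·C(ℓ,t)·(K-2m-t-p-ℓ)_t/(K-2m-t-p-1)_t = 0, i.e., the ℓ-th finite difference of the function t ↦ (K-2m-t-p-ℓ)_t/(K-2m-t-p-1)_t vanishes, because this ratio is a polynomial in t of degree at most ℓ-1. -/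
open Finset

/-- Rising factorial `x (x+1) ⋯ (x+n-1)` in a field. -/
def risingF {F : Type*} [Field F] (x : F) (n : ℕ) : F := ∏ i ∈ Finset.range n, (x + i)

lemma risingF_add {F : Type*} [Field F] (x : F) (a b : ℕ) :
    risingF x (a + b) = risingF x a * risingF (x + a) b := by
  unfold risingF
  rw [Finset.prod_range_add]
  congr 1
  refine Finset.prod_congr rfl fun i _ => ?_
  push_cast
  ring

open Polynomial fwdDiff in
lemma fwdDiff_iter_poly_eq_zero {F : Type*} [Field F] [CharZero F] :
    ∀ (n : ℕ) (P : F[X]), P.degree < n → (fwdDiff (1:F))^[n] (fun t : F => P.eval (t:F)) = 0 := by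
  intro n
  induction n with
  | zero =>
    intro P hP
    have : P = 0 := by simpa using hP
    simp [this]
    rfl
  | succ n IH =>
    intro P hP
    rw [Function.iterate_succ_apply]
    have hΔ : fwdDiff (1:F) (fun t : F => P.eval (t:F)) = fun t : F => (P.comp (X + 1) - P).eval t := by
      funext t
      simp [fwdDiff, Polynomial.eval_comp]
    rw [hΔ]
    apply IH
    rcases le_or_gt P.degree 0 with h0 | h0
    · have hc : P.comp (X + 1) = P := by
        conv_lhs => rw [Polynomial.eq_C_of_degree_le_zero h0]
        rw [Polynomial.C_comp]
        exact (Polynomial.eq_C_of_degree_le_zero h0).symm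
      rw [hc, sub_self, Polynomial.degree_zero]
      exact bot_lt_iff_ne_bot.mpr (by simp)
    · have hne : P ≠ 0 := fun h => by simp [h] at h0
      have hX1 : (X + 1 : F[X]) = X + Polynomial.C 1 := by rw [Polynomial.C_1]
      have hndX : (X + 1 : F[X]).natDegree = 1 := by
        rw [hX1]; exact Polynomial.natDegree_X_add_C 1
      have hlc : (P.comp (X + 1)).leadingCoeff = P.leadingCoeff := by
        rw [Polynomial.leadingCoeff_comp (by rw [hndX]; omega)]
        rw [hX1, Polynomial.leadingCoeff_X_add_C, one_pow, mul_one]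
      have hlcne : (P.comp (X + 1)).leadingCoeff ≠ 0 :=
        hlc ▸ Polynomial.leadingCoeff_ne_zero.mpr hne
      have hcne : P.comp (X + 1) ≠ 0 := fun h => hlcne (by rw [h]; simp)
      have hdeg : (P.comp (X + 1)).degree = P.degree := by
        rw [Polynomial.degree_eq_natDegree hcne, Polynomial.degree_eq_natDegree hne,
          Polynomial.natDegree_comp, hndX, mul_one]
      have hlt := Polynomial.degree_sub_lt hdeg hcne hlc
      rw [hdeg] at hlt
      have hnd : P.natDegree ≤ n := by
        have := (Polynomial.natDegree_lt_iff_degree_lt hne).mpr (by exact_mod_cast hP)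
        omega
      calc (P.comp (X + 1) - P).degree < P.degree := hlt
        _ = (P.natDegree : WithBot ℕ) := Polynomial.degree_eq_natDegree hne
        _ ≤ (n : WithBot ℕ) := by exact_mod_cast hnd

/-- For integers `ℓ ≥ 1` and parameters `K, m, p` in a field of characteristic 0 with all
denominators nonzero,
`Σ_{t=0}^ℓ (-1)^t·C(ℓ,t)·(K-2m-t-p-ℓ)_t/(K-2m-t-p-1)_t = 0`,
i.e. the `ℓ`-th finite difference of `t ↦ (K-2m-t-p-ℓ)_t/(K-2m-t-p-1)_t` vanishes. -/
theorem statement9 {F : Type*} [Field F] [CharZero F] (K m p : F) (ℓ : ℕ) (hℓ : 1 ≤ ℓ)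
    (hden : ∀ t ∈ Finset.range (ℓ + 1),
      risingF (K - 2 * m - (t : F) - p - 1) t ≠ 0) :
    ∑ t ∈ Finset.range (ℓ + 1),
      (-1 : F) ^ t * (ℓ.choose t : F) *
        risingF (K - 2 * m - (t : F) - p - (ℓ : F)) t /
        risingF (K - 2 * m - (t : F) - p - 1) t = 0 := by
  obtain ⟨L, rfl⟩ : ∃ L, ℓ = L + 1 := ⟨ℓ - 1, by omega⟩
  set ℓ := L + 1 with hℓdef
  set A : F := K - 2 * m - p with hA
  -- the common denominator
  set D : F := risingF (A - ℓ) L with hD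
  have hDne : D ≠ 0 := by
    have := hden L (Finset.mem_range.mpr (by omega))
    have e : K - 2 * m - (L : F) - p - 1 = A - ℓ := by
      rw [hA, hℓdef]; push_cast; ring
    rwa [e] at this
  -- the polynomial whose values give the ratio
  set P : Polynomial F :=
    ∏ i ∈ Finset.range L, (Polynomial.C (A - (ℓ : F) + (i : F)) - Polynomial.X) with hP
  have hPeval : ∀ y : F, P.eval y = risingF (A - y - ℓ) L := by
    intro y
    rw [hP, Polynomial.eval_prod, risingF]
    refine Finset.prod_congr rfl fun i _ => ?_
    simp
    ring
  -- each term of the sum equals (-1)^t * choose * P.eval (t:F) / D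
  have key : ∀ t ∈ Finset.range (ℓ + 1),
      (-1 : F) ^ t * (ℓ.choose t : F) *
          risingF (K - 2 * m - (t : F) - p - (ℓ : F)) t /
          risingF (K - 2 * m - (t : F) - p - 1) t
        = (-1 : F) ^ t * (ℓ.choose t : F) * P.eval (t:F) / D := by
    intro t ht
    have hM := hden t ht
    have e1 : K - 2 * m - (t : F) - p - (ℓ : F) = A - t - ℓ := by rw [hA]; ring
    have e2 : K - 2 * m - (t : F) - p - 1 = A - t - 1 := by rw [hA]; ring
    rw [e1, e2]; rw [e2] at hM
    have hid : risingF (A - t - ℓ) t * D = risingF (A - t - 1) t * risingF (A - t - ℓ) L := by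
      have h1 := risingF_add (A - t - ℓ) t L
      have h2 := risingF_add (A - t - ℓ) L t
      rw [Nat.add_comm t L] at h1
      rw [h1] at h2
      have e3 : A - (t : F) - ℓ + t = A - ℓ := by ring
      have e4 : A - (t : F) - ℓ + L = A - t - 1 := by rw [hℓdef]; push_cast; ring
      rw [e3] at h2
      rw [e4] at h2
      rw [hD]
      rw [mul_comm (risingF (A - t - 1) t), ← h2]
    rw [hPeval]
    rw [div_eq_div_iff hM hDne]
    rw [mul_comm (risingF (A - (t:F) - 1) t)] at hid
    calc (-1:F) ^ t * (ℓ.choose t : F) * risingF (A - t - ℓ) t * D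
        = (-1:F) ^ t * (ℓ.choose t : F) * (risingF (A - t - ℓ) t * D) := by ring
      _ = (-1:F) ^ t * (ℓ.choose t : F) * (risingF (A - t - ℓ) L * risingF (A - t - 1) t) := by
          rw [hid]
      _ = (-1:F) ^ t * (ℓ.choose t : F) * risingF (A - t - ℓ) L * risingF (A - t - 1) t := by
          ring
  rw [Finset.sum_congr rfl key]
  have hPd : P.degree < (ℓ : WithBot ℕ) := by
    have h1 : P.natDegree ≤ L := by
      refine le_trans (Polynomial.natDegree_prod_le _ _) ?_
      refine le_trans (Finset.sum_le_card_nsmul _ _ 1 fun i _ => ?_) (by simp)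
      refine le_trans (Polynomial.natDegree_sub_le _ _) ?_
      rw [Polynomial.natDegree_C, Polynomial.natDegree_X]
      omega
    calc P.degree ≤ (P.natDegree : WithBot ℕ) := Polynomial.degree_le_natDegree
      _ ≤ (L : WithBot ℕ) := by exact_mod_cast h1
      _ < (ℓ : WithBot ℕ) := by exact_mod_cast Nat.lt_succ_self L
  have hzero := fwdDiff_iter_poly_eq_zero ℓ P hPd
  have hsum := fwdDiff_iter_eq_sum_shift (1 : F) (fun t : F => P.eval (t:F)) ℓ 0
  rw [hzero] at hsum
  have hsum' : (0 : F)
      = ∑ k ∈ Finset.range (ℓ + 1), ((-1 : F) ^ (ℓ - k) * (ℓ.choose k : F)) * P.eval (k:F) := by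
    have h := hsum
    simp only [Pi.zero_apply, zero_add, nsmul_eq_mul, mul_one, zsmul_eq_mul] at h
    rw [h]
    refine Finset.sum_congr rfl fun k _ => ?_
    push_cast
    ring
  have main : ∑ t ∈ Finset.range (ℓ + 1),
      (-1 : F) ^ t * (ℓ.choose t : F) * P.eval (t:F) = 0 := by
    have : ∑ t ∈ Finset.range (ℓ + 1), (-1 : F) ^ t * (ℓ.choose t : F) * P.eval (t:F)
        = (-1 : F) ^ ℓ *
          ∑ k ∈ Finset.range (ℓ + 1), ((-1 : F) ^ (ℓ - k) * (ℓ.choose k : F)) * P.eval (k:F) := by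
      rw [Finset.mul_sum]
      refine Finset.sum_congr rfl fun t ht => ?_
      have ht' : t ≤ ℓ := by
        have := Finset.mem_range.mp ht; omega
      have hsign : (-1 : F) ^ t = (-1 : F) ^ ℓ * (-1 : F) ^ (ℓ - t) := by
        have h1 : (-1 : F) ^ (ℓ - t) * (-1 : F) ^ t = (-1 : F) ^ ℓ := by
          rw [← pow_add, Nat.sub_add_cancel ht']
        have h2 : (-1 : F) ^ (ℓ - t) * (-1 : F) ^ (ℓ - t) = 1 := by
          rw [← pow_add, ← two_mul, pow_mul]; simp
        calc (-1 : F) ^ t = ((-1 : F) ^ (ℓ - t) * (-1 : F) ^ (ℓ - t)) * (-1 : F) ^ t := by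
              rw [h2, one_mul]
          _ = (-1 : F) ^ (ℓ - t) * ((-1 : F) ^ (ℓ - t) * (-1 : F) ^ t) := by ring
          _ = (-1 : F) ^ ℓ * (-1 : F) ^ (ℓ - t) := by rw [h1]; ring
      rw [hsign]; ring
    rw [this, ← hsum', mul_zero]
  calc ∑ t ∈ Finset.range (ℓ + 1), (-1 : F) ^ t * (ℓ.choose t : F) * P.eval (t:F) / D
      = (∑ t ∈ Finset.range (ℓ + 1), (-1 : F) ^ t * (ℓ.choose t : F) * P.eval (t:F)) / D := by
        rw [Finset.sum_div]
    _ = 0 := by rw [main, zero_div]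
end

section
/- Let f, g be holomorphic on the upper half-plane, and for integers k, ℓ > 0 define the Cohen–Kuznetsov series Φ_{f,k}(τ,X) = Σ_{n≥0} D^n f(τ)·X^n/(n!·(k)_n). Then the formal power series identity Σ_{n≥0} [f,g]_n^{(k,ℓ)}(τ)·X^n/((k)_n·(ℓ)_n) = Φ_{f,k}(τ,-X)·Φ_{g,ℓ}(τ,X) holds, where [f,g]_n^{(k,ℓ)} = Σ_{i=0}^n (-1)^i·C(n+k-1,n-i)·C(n+ℓ-1,i)·D^i(f)·D^{n-i}(g) is the n-th Rankin–Cohen bracket. -/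
/-!
Coefficientwise both sides are sums over `i + j = n`, and the factorization
`(k)_{i+j} = (k)_i · j! · C(i+j+k-1, j)` of the rising factorial cancels each binomial weight of
the bracket against `(k)_n (ℓ)_n`, leaving the product `1/(i! (k)_i) · 1/(j! (ℓ)_j)`.
-/

open Complex Finset

noncomputable section

/-- The `n`-th Rankin–Cohen bracket
`[f,g]_n^{(k,ℓ)} = Σ_{i=0}^n (-1)^i·C(n+k-1,n-i)·C(n+ℓ-1,i)·D^i(f)·D^{n-i}(g)`. -/
def RCbracket (f g : ℂ → ℂ) (k l n : ℕ) (τ : ℂ) : ℂ :=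
  ∑ i ∈ Finset.range (n + 1),
    (-1 : ℂ) ^ i * ((n + k - 1).choose (n - i) : ℂ) * ((n + l - 1).choose i : ℂ) *
      Dop^[i] f τ * Dop^[n - i] g τ

lemma risingC_natCast (k n : ℕ) : risingC (k : ℂ) n = (k.ascFactorial n : ℂ) := by
  simp [risingC, Nat.ascFactorial_eq_prod_range]

lemma Nat.ascFactorial_add_eq_mul_factorial_mul_choose (k i j : ℕ) :
    k.ascFactorial (i + j) = k.ascFactorial i * (j.factorial * (i + j + k - 1).choose j) := by
  rw [← Nat.ascFactorial_mul_ascFactorial, Nat.ascFactorial_eq_factorial_mul_choose' (k + i),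
    show k + i + j - 1 = i + j + k - 1 by omega]

lemma choose_div_risingC_add {k : ℕ} (hk : 0 < k) (i j : ℕ) :
    ((i + j + k - 1).choose j : ℂ) / risingC (k : ℂ) (i + j)
      = (risingC (k : ℂ) i * (j.factorial : ℂ))⁻¹ := by
  obtain ⟨m, rfl⟩ := Nat.exists_eq_add_of_lt hk
  have hi : (m + 1).ascFactorial i ≠ 0 := (Nat.ascFactorial_pos m i).ne'
  have hij : (i + j + (m + 1) - 1).choose j ≠ 0 := (Nat.choose_pos (by omega)).ne'
  rw [Nat.zero_add, risingC_natCast, risingC_natCast,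
    Nat.ascFactorial_add_eq_mul_factorial_mul_choose]
  push_cast
  field_simp

theorem statement12_general (f g : ℂ → ℂ)
    (k l : ℕ) (hk : 0 < k) (hl : 0 < l) (τ : ℂ) :
    (PowerSeries.mk fun n => RCbracket f g k l n τ / (risingC (k : ℂ) n * risingC (l : ℂ) n))
      = (PowerSeries.mk fun n =>
          (-1 : ℂ) ^ n * Dop^[n] f τ / ((n.factorial : ℂ) * risingC (k : ℂ) n)) *
        (PowerSeries.mk fun n =>
          Dop^[n] g τ / ((n.factorial : ℂ) * risingC (l : ℂ) n)) := by
  ext n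
  rw [PowerSeries.coeff_mul, Finset.Nat.sum_antidiagonal_eq_sum_range_succ_mk]
  simp only [PowerSeries.coeff_mk, RCbracket, Finset.sum_div]
  refine Finset.sum_congr rfl fun i hi => ?_
  obtain ⟨j, rfl⟩ : ∃ j, n = i + j :=
    Nat.exists_eq_add_of_le (Nat.lt_succ_iff.mp (Finset.mem_range.mp hi))
  have hfk := choose_div_risingC_add hk i j
  have hgl := choose_div_risingC_add hl j i
  rw [add_comm j i] at hgl
  rw [Nat.add_sub_cancel_left]
  calc _ = (-1 : ℂ) ^ i * Dop^[i] f τ * Dop^[j] g τ *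
        (((i + j + k - 1).choose j : ℂ) / risingC (k : ℂ) (i + j) *
          (((i + j + l - 1).choose i : ℂ) / risingC (l : ℂ) (i + j))) := by ring
    _ = _ := by rw [hfk, hgl]; ring

/-- For holomorphic `f, g` and `k, ℓ > 0`, the formal power series identity
`Σ_{n≥0} [f,g]_n^{(k,ℓ)}(τ)·Xⁿ/((k)_n (ℓ)_n) = Φ_{f,k}(τ,-X)·Φ_{g,ℓ}(τ,X)`, where
`Φ_{f,k}(τ,X) = Σ_{n≥0} Dⁿf(τ)·Xⁿ/(n!·(k)_n)` is the Cohen–Kuznetsov series. -/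
theorem statement12 (f g : ℂ → ℂ)
    (hf : DifferentiableOn ℂ f {z : ℂ | 0 < z.im})
    (hg : DifferentiableOn ℂ g {z : ℂ | 0 < z.im})
    (k l : ℕ) (hk : 0 < k) (hl : 0 < l) (τ : ℂ) :
    (PowerSeries.mk fun n => RCbracket f g k l n τ / (risingC (k : ℂ) n * risingC (l : ℂ) n))
      = (PowerSeries.mk fun n =>
          (-1 : ℂ) ^ n * Dop^[n] f τ / ((n.factorial : ℂ) * risingC (k : ℂ) n)) *
        (PowerSeries.mk fun n =>
          Dop^[n] g τ / ((n.factorial : ℂ) * risingC (l : ℂ) n)) :=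
  statement12_general f g k l hk hl τ
end
end

section
/- The function Φ₁(τ,X) := 1 + (1/12)·Σ_{n≥1} D^{n-1}E₂(τ)·X^n/(n!·(n-1)!) satisfies Φ₁((aτ+b)/(cτ+d), X/(cτ+d)²) = exp((c/(cτ+d))·(X/(2πi)))·Φ₁(τ,X) for all [[a,b],[c,d]] ∈ SL₂(ℤ). -/
open Complex

noncomputable section

/-- The `n`-th coefficient of the Cohen–Kuznetsov series of the constant function `1`:
`Φ₁(τ,X) = 1 + (1/12)·Σ_{n≥1} D^{n-1}E₂(τ)·Xⁿ/(n!(n-1)!)`. -/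
def phi1Coeff (E2 : ℂ → ℂ) (τ : ℂ) (n : ℕ) : ℂ :=
  if n = 0 then 1
  else Dop^[n - 1] E2 τ / (12 * (n.factorial : ℂ) * ((n - 1).factorial : ℂ))

open Finset

namespace Stmt15

def Cc (m k : ℕ) : ℂ :=
  ((m+1).factorial : ℂ) * (m.factorial : ℂ) /
    (((k+1).factorial : ℂ) * (k.factorial : ℂ) * ((m-k).factorial : ℂ))

lemma fact_ne (n : ℕ) : ((n.factorial : ℂ)) ≠ 0 :=
  Nat.cast_ne_zero.mpr n.factorial_ne_zero

lemma fact_cast_succ (n : ℕ) : (((n+1).factorial : ℕ) : ℂ) = ((n:ℂ)+1) * ((n.factorial : ℕ) : ℂ) := by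
  rw [Nat.factorial_succ]; push_cast; ring

lemma Cc_self (m : ℕ) : Cc m m = 1 := by
  unfold Cc
  rw [Nat.sub_self]
  field_simp [fact_ne]
  rw [Nat.factorial_zero, Nat.cast_one]
  exact div_self (mul_ne_zero (fact_ne _) (fact_ne _))

lemma Crec (k q : ℕ) :
    (2*(k:ℂ)+q+4) * Cc (k+1+q) (k+1) + Cc (k+1+q) k = Cc (k+2+q) (k+1) := by
  unfold Cc
  have h1 : k+1+q - (k+1) = q := by omega
  have h2 : k+1+q - k = q+1 := by omega
  have h3 : k+2+q - (k+1) = q+1 := by omega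
  have e1 : k+1+q = k+q+1 := by omega
  have e2 : k+2+q = (k+q+1)+1 := by omega
  rw [h1, h2, h3, e1, e2]
  have d1 : (((k+1+1).factorial:ℕ):ℂ) * (((k+1).factorial:ℕ):ℂ) * ((q.factorial:ℕ):ℂ) ≠ 0 :=
    mul_ne_zero (mul_ne_zero (fact_ne _) (fact_ne _)) (fact_ne _)
  have d2 : (((k+1).factorial:ℕ):ℂ) * ((k.factorial:ℕ):ℂ) * (((q+1).factorial:ℕ):ℂ) ≠ 0 :=
    mul_ne_zero (mul_ne_zero (fact_ne _) (fact_ne _)) (fact_ne _)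
  have d3 : (((k+1+1).factorial:ℕ):ℂ) * (((k+1).factorial:ℕ):ℂ) * (((q+1).factorial:ℕ):ℂ) ≠ 0 :=
    mul_ne_zero (mul_ne_zero (fact_ne _) (fact_ne _)) (fact_ne _)
  rw [← mul_div_assoc, div_add_div _ _ d1 d2, div_eq_div_iff (mul_ne_zero d1 d2) d3]
  simp only [fact_cast_succ]
  push_cast
  ring

end Stmt15

namespace Stmt15

lemma Cc_zero_step (m : ℕ) : ((m:ℂ)+2) * Cc m 0 = Cc (m+1) 0 := by
  unfold Cc
  rw [Nat.sub_zero, Nat.sub_zero]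
  simp only [zero_add, Nat.factorial_one, Nat.factorial_zero, Nat.cast_one, mul_one, one_mul]
  rw [mul_div_assoc, div_self (fact_ne m), mul_one,
      mul_div_assoc, div_self (fact_ne (m+1)), mul_one, fact_cast_succ (m+1)]
  push_cast; ring

lemma sumstep (m : ℕ) (u : ℂ) (F : ℕ → ℂ) :
    (∑ k ∈ range (m+1), (2*(m:ℂ)+2 - ((m-k : ℕ):ℂ)) * Cc m k * u^((m-k)+1) * F k)
      + ∑ k ∈ range (m+1), Cc m k * u^(m-k) * F (k+1)
    = ∑ k ∈ range (m+2), Cc (m+1) k * u^((m+1)-k) * F k := by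
  have hL1 : (∑ k ∈ range (m+1), (2*(m:ℂ)+2 - ((m-k:ℕ):ℂ)) * Cc m k * u^((m-k)+1) * F k)
      = (∑ k ∈ range m, (2*(m:ℂ)+2 - ((m-(k+1):ℕ):ℂ)) * Cc m (k+1) * u^((m-(k+1))+1) * F (k+1))
        + ((m:ℂ)+2) * Cc m 0 * u^(m+1) * F 0 := by
    rw [Finset.sum_range_succ']
    congr 1
    rw [Nat.sub_zero]
    ring
  have hR1 : (∑ k ∈ range (m+2), Cc (m+1) k * u^((m+1)-k) * F k)
      = (∑ k ∈ range (m+1), Cc (m+1) (k+1) * u^(m-k) * F (k+1))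
        + Cc (m+1) 0 * u^(m+1) * F 0 := by
    rw [Finset.sum_range_succ']
    congr 1
    apply Finset.sum_congr rfl
    intro k _
    have h : m+1-(k+1) = m-k := by omega
    rw [h]
  rw [hL1, hR1, Finset.sum_range_succ (fun k => Cc m k * u^(m-k) * F (k+1)) m,
    Finset.sum_range_succ (fun k => Cc (m+1) (k+1) * u^(m-k) * F (k+1)) m]
  rw [Cc_self, Nat.sub_self, pow_zero]
  have hCmm : Cc (m+1) (m+1) = 1 := Cc_self (m+1)
  rw [hCmm]
  rw [← Cc_zero_step m]
  have hmain : (∑ k ∈ range m, (2*(m:ℂ)+2 - ((m-(k+1):ℕ):ℂ)) * Cc m (k+1) * u^((m-(k+1))+1) * F (k+1))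
      + (∑ k ∈ range m, Cc m k * u^(m-k) * F (k+1))
      = ∑ k ∈ range m, Cc (m+1) (k+1) * u^(m-k) * F (k+1) := by
    rw [← Finset.sum_add_distrib]
    apply Finset.sum_congr rfl
    intro k hk
    have hkm : k < m := Finset.mem_range.mp hk
    obtain ⟨q, hq⟩ : ∃ q, m = k+1+q := ⟨m-k-1, by omega⟩
    subst hq
    have s1 : k+1+q - (k+1) = q := by omega
    have s2 : k+1+q - k = q+1 := by omega
    have s3 : k+1+q+1 = k+2+q := by omega
    rw [s1, s2, s3]
    push_cast
    linear_combination (u^(q+1) * F (k+1)) * Crec k q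
  linear_combination hmain

end Stmt15
namespace Stmt15

lemma P_ne : (2*(Real.pi:ℂ)*I) ≠ 0 :=
  mul_ne_zero (mul_ne_zero two_ne_zero (Complex.ofReal_ne_zero.mpr Real.pi_ne_zero)) Complex.I_ne_zero

def jf (c d : ℤ) : ℂ → ℂ := fun s => (c:ℂ)*s + (d:ℂ)
def gf (a b c d : ℤ) : ℂ → ℂ := fun s => ((a:ℂ)*s+(b:ℂ))/((c:ℂ)*s+(d:ℂ))
def uf (c d : ℤ) : ℂ → ℂ := fun s => ((c:ℂ)/((c:ℂ)*s+(d:ℂ))) * (1/(2*(Real.pi:ℂ)*I))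

lemma Hopen : IsOpen {z : ℂ | 0 < z.im} := isOpen_lt continuous_const Complex.continuous_im

variable {a b c d : ℤ} {τ : ℂ}

lemma jf_ne (hdet : a*d - b*c = 1) (hτ : 0 < τ.im) : jf c d τ ≠ 0 := by
  unfold jf
  intro h0
  by_cases hc : c = 0
  · subst hc
    simp only [Int.cast_zero, zero_mul, zero_add] at h0
    have hd : d = 0 := by exact_mod_cast h0
    rw [hd] at hdet; simp at hdet
  · have him : ((c:ℂ)*τ + (d:ℂ)).im = (c:ℝ) * τ.im := by
      simp [Complex.add_im, Complex.mul_im]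
    rw [h0] at him
    simp only [Complex.zero_im] at him
    have : (c:ℝ) * τ.im ≠ 0 :=
      mul_ne_zero (Int.cast_ne_zero.mpr hc) (ne_of_gt hτ)
    exact this him.symm

lemma im_gf (hdet : a*d - b*c = 1) (hτ : 0 < τ.im) : 0 < (gf a b c d τ).im := by
  have hj : jf c d τ ≠ 0 := jf_ne hdet hτ
  have hns : 0 < Complex.normSq (jf c d τ) := Complex.normSq_pos.mpr hj
  have hdR : (a:ℝ)*d - (b:ℝ)*(c:ℝ) = 1 := by exact_mod_cast hdet
  have hns' : Complex.normSq (jf c d τ) ≠ 0 := ne_of_gt hns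
  have him : (gf a b c d τ).im = τ.im / Complex.normSq (jf c d τ) := by
    unfold gf jf
    unfold jf at hns'
    rw [Complex.div_im, div_sub_div_same, div_eq_div_iff hns' hns']
    simp only [Complex.add_im, Complex.add_re, Complex.mul_im, Complex.mul_re,
      Complex.intCast_im, Complex.intCast_re]
    linear_combination (Complex.normSq ((c:ℂ)*τ + (d:ℂ)) * τ.im) * hdR
  rw [him]
  exact div_pos hτ hns

end Stmt15

namespace Stmt15

lemma hasDerivAt_jf (c d : ℤ) (τ : ℂ) : HasDerivAt (jf c d) ((c:ℂ)) τ := by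
  unfold jf
  simpa using ((hasDerivAt_id τ).const_mul ((c:ℂ))).add_const ((d:ℂ))

lemma hasDerivAt_gf (hdet : a*d - b*c = 1) (hj : jf c d τ ≠ 0) :
    HasDerivAt (gf a b c d) (((jf c d τ)^2)⁻¹) τ := by
  have h1 : HasDerivAt (fun s => (a:ℂ)*s + (b:ℂ)) ((a:ℂ)) τ := by
    simpa using ((hasDerivAt_id τ).const_mul ((a:ℂ))).add_const ((b:ℂ))
  have h2 := h1.div (hasDerivAt_jf c d τ) hj
  have hdC : (a:ℂ)*(d:ℂ) - (b:ℂ)*(c:ℂ) = 1 := by exact_mod_cast hdet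
  have hj' : ((c:ℂ)*τ+(d:ℂ)) ≠ 0 := hj
  refine h2.congr_deriv ?_
  symm
  unfold jf
  rw [eq_div_iff (pow_ne_zero 2 hj'), inv_mul_cancel₀ (pow_ne_zero 2 hj')]
  linear_combination -hdC

lemma hasDerivAt_uf (hj : jf c d τ ≠ 0) :
    HasDerivAt (uf c d) (-(2*(Real.pi:ℂ)*I) * (uf c d τ)^2) τ := by
  have h1 := ((hasDerivAt_const τ ((c:ℤ):ℂ)).div (hasDerivAt_jf c d τ) hj).mul_const
    (1/(2*(Real.pi:ℂ)*I))
  have hj' : ((c:ℂ)*τ+(d:ℂ)) ≠ 0 := hj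
  refine h1.congr_deriv ?_
  unfold uf jf
  field_simp [hj', Complex.I_ne_zero, Complex.ofReal_ne_zero.mpr Real.pi_ne_zero]
  ring

lemma iterDiff (E2 : ℂ → ℂ) (hE2d : DifferentiableOn ℂ E2 {z : ℂ | 0 < z.im}) :
    ∀ m : ℕ, DifferentiableOn ℂ (Dop^[m] E2) {z : ℂ | 0 < z.im}
  | 0 => hE2d
  | (m+1) => by
    rw [Function.iterate_succ_apply']
    have ih := iterDiff E2 hE2d m
    have h1 : AnalyticOnNhd ℂ (Dop^[m] E2) {z : ℂ | 0 < z.im} :=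
      ih.analyticOnNhd Hopen
    have h2 : DifferentiableOn ℂ (deriv (Dop^[m] E2)) {z : ℂ | 0 < z.im} :=
      h1.deriv.differentiableOn
    exact h2.const_smul ((2*(Real.pi:ℂ)*I)⁻¹)

lemma hasDerivAt_iter (E2 : ℂ → ℂ) (hE2d : DifferentiableOn ℂ E2 {z : ℂ | 0 < z.im})
    (m : ℕ) (hτ : 0 < τ.im) :
    HasDerivAt (Dop^[m] E2) ((2*(Real.pi:ℂ)*I) * Dop^[m+1] E2 τ) τ := by
  have hdiff : DifferentiableAt ℂ (Dop^[m] E2) τ :=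
    (iterDiff E2 hE2d m).differentiableAt (Hopen.mem_nhds hτ)
  have hval : (2*(Real.pi:ℂ)*I) * Dop^[m+1] E2 τ = deriv (Dop^[m] E2) τ := by
    rw [Function.iterate_succ_apply']
    show (2*(Real.pi:ℂ)*I) * ((2*(Real.pi:ℂ)*I)⁻¹ * deriv (Dop^[m] E2) τ) = _
    rw [← mul_assoc, mul_inv_cancel₀ P_ne, one_mul]
  rw [hval]
  exact hdiff.hasDerivAt

end Stmt15
namespace Stmt15

lemma algstep (m : ℕ) (u j P S X Y Z W T fm fm1 : ℂ) (hP : P ≠ 0)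
    (r1 : u * S = X) (r2 : ((2*m+2:ℕ):ℂ) * X - Z = W) (r3 : W + Y = T)
    (hfac : fm1 = ((m:ℂ)+1) * fm) :
    (((2*m+2:ℕ):ℂ) * j^(2*m+1) * (u*j*P) * (S + 12*fm*u^(m+1))
       + j^(2*m+2) * (((-P*Z + P*Y)) + 12*fm*(((m+1:ℕ):ℂ) * u^m * (-P*u^2)))) * (j^2 * P⁻¹)
    = j^(2*(m+1)+2) * (T + 12*fm1*u^(m+2)) := by
  have hPP : P * P⁻¹ = 1 := mul_inv_cancel₀ hP
  push_cast
  push_cast at r2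
  linear_combination (j^(2*m+4) * ((2*(m:ℂ)+2)*(u*S) + (2*(m:ℂ)+2)*12*fm*u^(m+2)
      - Z + Y - 12*fm*((m:ℂ)+1)*u^(m+2))) * hPP
    + (j^(2*m+4)*(2*(m:ℂ)+2)) * r1 + j^(2*m+4) * r2 + j^(2*m+4) * r3
    - (12*u^(m+2)*j^(2*m+4)) * hfac

end Stmt15

namespace Stmt15

lemma key (E2 : ℂ → ℂ) (hE2d : DifferentiableOn ℂ E2 {z : ℂ | 0 < z.im})
    (a b c d : ℤ) (hdet : a*d - b*c = 1)
    (hE2γ : ∀ τ : ℂ, 0 < τ.im → E2 (gf a b c d τ) =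
      (jf c d τ)^2 * E2 τ + (6/((Real.pi:ℂ)*I)) * (c:ℂ) * jf c d τ) :
    ∀ m : ℕ, ∀ τ : ℂ, 0 < τ.im →
      Dop^[m] E2 (gf a b c d τ) = (jf c d τ)^(2*m+2) *
        ((∑ k ∈ range (m+1), Cc m k * (uf c d τ)^(m-k) * Dop^[k] E2 τ)
          + 12 * (m.factorial : ℂ) * (uf c d τ)^(m+1)) := by
  intro m
  induction m with
  | zero =>
    intro τ hτ
    have hj : jf c d τ ≠ 0 := jf_ne hdet hτ
    have hj' : ((c:ℂ)*τ+(d:ℂ)) ≠ 0 := hj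
    rw [Finset.sum_range_one, Cc_self]
    simp only [Function.iterate_zero_apply, Nat.sub_zero, pow_zero, one_mul,
      Nat.factorial_zero, Nat.cast_one, mul_one, pow_one]
    rw [hE2γ τ hτ]
    unfold uf jf
    have h1 : 2*0+2 = 2 := rfl
    rw [h1, zero_add, pow_one]
    have hπ := Complex.ofReal_ne_zero.mpr Real.pi_ne_zero
    have hI := Complex.I_ne_zero
    field_simp
    ring
  | succ m ih =>
    intro τ hτ
    have hj : jf c d τ ≠ 0 := jf_ne hdet hτ
    have hj' : ((c:ℂ)*τ+(d:ℂ)) ≠ 0 := hj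
    have hγ : 0 < (gf a b c d τ).im := im_gf hdet hτ
    set P : ℂ := 2*(Real.pi:ℂ)*I with hPdef
    have hdu : HasDerivAt (uf c d) (-(P) * (uf c d τ)^2) τ := hasDerivAt_uf hj
    have hdF : ∀ k : ℕ, HasDerivAt (Dop^[k] E2) (P * Dop^[k+1] E2 τ) τ :=
      fun k => hasDerivAt_iter E2 hE2d k hτ
    have hdsum : HasDerivAt
        (fun s => ∑ k ∈ range (m+1), Cc m k * (uf c d s)^(m-k) * Dop^[k] E2 s)
        (∑ k ∈ range (m+1),
          (Cc m k * (((m-k:ℕ):ℂ) * (uf c d τ)^(m-k-1) * (-(P) * (uf c d τ)^2)) * Dop^[k] E2 τ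
           + Cc m k * (uf c d τ)^(m-k) * (P * Dop^[k+1] E2 τ))) τ := by
      apply HasDerivAt.fun_sum
      intro k _
      exact ((hdu.pow (m-k)).const_mul (Cc m k)).mul (hdF k)
    have hdcst : HasDerivAt (fun s => 12*(m.factorial:ℂ)*(uf c d s)^(m+1))
        (12*(m.factorial:ℂ) * (((m+1:ℕ):ℂ) * (uf c d τ)^m * (-(P) * (uf c d τ)^2))) τ :=
      (hdu.pow (m+1)).const_mul (12*(m.factorial:ℂ))
    have hdG : HasDerivAt
        (fun s => (jf c d s)^(2*m+2) *
          ((∑ k ∈ range (m+1), Cc m k * (uf c d s)^(m-k) * Dop^[k] E2 s)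
            + 12*(m.factorial:ℂ)*(uf c d s)^(m+1)))
        (((2*m+2:ℕ):ℂ) * (jf c d τ)^(2*m+1) * (c:ℂ) *
            ((∑ k ∈ range (m+1), Cc m k * (uf c d τ)^(m-k) * Dop^[k] E2 τ)
              + 12*(m.factorial:ℂ)*(uf c d τ)^(m+1))
          + (jf c d τ)^(2*m+2) *
            ((∑ k ∈ range (m+1),
              (Cc m k * (((m-k:ℕ):ℂ) * (uf c d τ)^(m-k-1) * (-(P) * (uf c d τ)^2)) * Dop^[k] E2 τ
               + Cc m k * (uf c d τ)^(m-k) * (P * Dop^[k+1] E2 τ)))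
              + 12*(m.factorial:ℂ) * (((m+1:ℕ):ℂ) * (uf c d τ)^m * (-(P) * (uf c d τ)^2)))) τ :=
      ((hasDerivAt_jf c d τ).pow (2*m+2)).mul (hdsum.add hdcst)
    have hdγτ : HasDerivAt (Dop^[m] E2) (P * Dop^[m+1] E2 (gf a b c d τ)) (gf a b c d τ) :=
      hasDerivAt_iter E2 hE2d m hγ
    have hcomp : HasDerivAt (fun s => Dop^[m] E2 (gf a b c d s))
        (P * Dop^[m+1] E2 (gf a b c d τ) * ((jf c d τ)^2)⁻¹) τ :=
      hdγτ.comp τ (hasDerivAt_gf hdet hj)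
    have hev : (fun s => Dop^[m] E2 (gf a b c d s)) =ᶠ[nhds τ]
        (fun s => (jf c d s)^(2*m+2) *
          ((∑ k ∈ range (m+1), Cc m k * (uf c d s)^(m-k) * Dop^[k] E2 s)
            + 12*(m.factorial:ℂ)*(uf c d s)^(m+1))) := by
      filter_upwards [Hopen.mem_nhds hτ] with s hs
      exact ih s hs
    have heq1 : P * Dop^[m+1] E2 (gf a b c d τ) * ((jf c d τ)^2)⁻¹
        = (((2*m+2:ℕ):ℂ) * (jf c d τ)^(2*m+1) * (c:ℂ) *
            ((∑ k ∈ range (m+1), Cc m k * (uf c d τ)^(m-k) * Dop^[k] E2 τ)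
              + 12*(m.factorial:ℂ)*(uf c d τ)^(m+1))
          + (jf c d τ)^(2*m+2) *
            ((∑ k ∈ range (m+1),
              (Cc m k * (((m-k:ℕ):ℂ) * (uf c d τ)^(m-k-1) * (-(P) * (uf c d τ)^2)) * Dop^[k] E2 τ
               + Cc m k * (uf c d τ)^(m-k) * (P * Dop^[k+1] E2 τ)))
              + 12*(m.factorial:ℂ) * (((m+1:ℕ):ℂ) * (uf c d τ)^m * (-(P) * (uf c d τ)^2)))) := by
      rw [← hdG.deriv, ← hcomp.deriv]
      exact hev.deriv_eq
    have heq1' : Dop^[m+1] E2 (gf a b c d τ) * (P * (((jf c d τ)^2)⁻¹))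
        = (((2*m+2:ℕ):ℂ) * (jf c d τ)^(2*m+1) * (c:ℂ) *
            ((∑ k ∈ range (m+1), Cc m k * (uf c d τ)^(m-k) * Dop^[k] E2 τ)
              + 12*(m.factorial:ℂ)*(uf c d τ)^(m+1))
          + (jf c d τ)^(2*m+2) *
            ((∑ k ∈ range (m+1),
              (Cc m k * (((m-k:ℕ):ℂ) * (uf c d τ)^(m-k-1) * (-(P) * (uf c d τ)^2)) * Dop^[k] E2 τ
               + Cc m k * (uf c d τ)^(m-k) * (P * Dop^[k+1] E2 τ)))
              + 12*(m.factorial:ℂ) * (((m+1:ℕ):ℂ) * (uf c d τ)^m * (-(P) * (uf c d τ)^2)))) := by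
      linear_combination heq1
    have hA : P * (((jf c d τ)^2)⁻¹) ≠ 0 :=
      mul_ne_zero P_ne (inv_ne_zero (pow_ne_zero 2 hj))
    have h2 : Dop^[m+1] E2 (gf a b c d τ)
        = (((2*m+2:ℕ):ℂ) * (jf c d τ)^(2*m+1) * (c:ℂ) *
            ((∑ k ∈ range (m+1), Cc m k * (uf c d τ)^(m-k) * Dop^[k] E2 τ)
              + 12*(m.factorial:ℂ)*(uf c d τ)^(m+1))
          + (jf c d τ)^(2*m+2) *
            ((∑ k ∈ range (m+1),
              (Cc m k * (((m-k:ℕ):ℂ) * (uf c d τ)^(m-k-1) * (-(P) * (uf c d τ)^2)) * Dop^[k] E2 τ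
               + Cc m k * (uf c d τ)^(m-k) * (P * Dop^[k+1] E2 τ)))
              + 12*(m.factorial:ℂ) * (((m+1:ℕ):ℂ) * (uf c d τ)^m * (-(P) * (uf c d τ)^2)))) * (P * (((jf c d τ)^2)⁻¹))⁻¹ :=
      (eq_mul_inv_iff_mul_eq₀ hA).mpr heq1'
    rw [mul_inv_rev, inv_inv] at h2
    have hc' : (c:ℂ) = uf c d τ * jf c d τ * P := by
      rw [hPdef]
      unfold uf jf
      field_simp
    have hDS : (∑ k ∈ range (m+1),
          (Cc m k * (((m-k:ℕ):ℂ) * (uf c d τ)^(m-k-1) * (-(P) * (uf c d τ)^2)) * Dop^[k] E2 τ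
           + Cc m k * (uf c d τ)^(m-k) * (P * Dop^[k+1] E2 τ)))
        = -P * (∑ k ∈ range (m+1), ((m-k:ℕ):ℂ) * Cc m k * (uf c d τ)^((m-k)+1) * Dop^[k] E2 τ)
          + P * (∑ k ∈ range (m+1), Cc m k * (uf c d τ)^(m-k) * Dop^[k+1] E2 τ) := by
      rw [Finset.sum_add_distrib, Finset.mul_sum, Finset.mul_sum]
      congr 1
      · apply Finset.sum_congr rfl
        intro k hk
        by_cases hkm : k = m
        · subst hkm; simp [Nat.sub_self]
        · have hklt : k < m :=
            lt_of_le_of_ne (Nat.lt_succ_iff.mp (Finset.mem_range.mp hk)) hkm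
          have hex : (m-k)+1 = (m-k-1)+2 := by omega
          rw [hex, pow_add]
          ring
      · apply Finset.sum_congr rfl
        intro k _
        ring
    have r1 : uf c d τ * (∑ k ∈ range (m+1), Cc m k * (uf c d τ)^(m-k) * Dop^[k] E2 τ)
        = ∑ k ∈ range (m+1), Cc m k * (uf c d τ)^((m-k)+1) * Dop^[k] E2 τ := by
      rw [Finset.mul_sum]
      apply Finset.sum_congr rfl
      intro k _
      ring
    have r2 : ((2*m+2:ℕ):ℂ) * (∑ k ∈ range (m+1), Cc m k * (uf c d τ)^((m-k)+1) * Dop^[k] E2 τ)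
        - (∑ k ∈ range (m+1), ((m-k:ℕ):ℂ) * Cc m k * (uf c d τ)^((m-k)+1) * Dop^[k] E2 τ)
        = ∑ k ∈ range (m+1), (2*(m:ℂ)+2 - ((m-k:ℕ):ℂ)) * Cc m k * (uf c d τ)^((m-k)+1) * Dop^[k] E2 τ := by
      rw [Finset.mul_sum, ← Finset.sum_sub_distrib]
      apply Finset.sum_congr rfl
      intro k _
      push_cast
      ring
    have r3 : (∑ k ∈ range (m+1), (2*(m:ℂ)+2 - ((m-k:ℕ):ℂ)) * Cc m k * (uf c d τ)^((m-k)+1) * Dop^[k] E2 τ)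
        + (∑ k ∈ range (m+1), Cc m k * (uf c d τ)^(m-k) * Dop^[k+1] E2 τ)
        = ∑ k ∈ range (m+1+1), Cc (m+1) k * (uf c d τ)^((m+1)-k) * Dop^[k] E2 τ :=
      sumstep m (uf c d τ) (fun k => Dop^[k] E2 τ)
    have hfac : ((m+1).factorial : ℂ) = ((m:ℂ)+1) * (m.factorial:ℂ) := fact_cast_succ m
    rw [h2, hc', hDS]
    exact algstep m (uf c d τ) (jf c d τ) P _ _ _ _ _ _ _ _ P_ne r1 r2 r3 hfac

end Stmt15

namespace Stmt15

lemma twelve_ne : (12:ℂ) ≠ 0 := by norm_num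

lemma D1_ne (m : ℕ) : (12*((m+1).factorial:ℂ)*(m.factorial:ℂ)) ≠ 0 :=
  mul_ne_zero (mul_ne_zero twelve_ne (fact_ne (m+1))) (fact_ne m)

lemma final_term (m k : ℕ) (u F : ℂ) :
    Cc m k * u^(m-k) * F / (12*((m+1).factorial:ℂ)*(m.factorial:ℂ))
      = u^(m-k)/(((m-k).factorial:ℕ):ℂ) * (F / (12*((k+1).factorial:ℂ)*((k.factorial:ℕ):ℂ))) := by
  unfold Cc
  have h1 := fact_ne (m+1)
  have h2 := fact_ne m
  have h3 := fact_ne (k+1)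
  have h4 := fact_ne k
  have h5 := fact_ne (m-k)
  field_simp

end Stmt15


/-- `Φ₁(τ,X) = 1 + (1/12) Σ_{n≥1} D^{n-1}E₂(τ) Xⁿ/(n!(n-1)!)` satisfies
`Φ₁((aτ+b)/(cτ+d), X/(cτ+d)²) = exp((c/(cτ+d))·(X/(2πi)))·Φ₁(τ,X)` for all
`[[a,b],[c,d]] ∈ SL₂(ℤ)`, as an identity of formal power series in `X`
(both sides expanded coefficientwise).  Here `E₂` is the weight-2 quasimodular Eisenstein
series, characterized by holomorphy and its transformation law
`E₂(γτ) = (cτ+d)²E₂(τ) + (6/(πi))·c(cτ+d)`. -/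
theorem statement15 (E2 : ℂ → ℂ)
    (hE2d : DifferentiableOn ℂ E2 {z : ℂ | 0 < z.im})
    (hE2 : ∀ a b c d : ℤ, a * d - b * c = 1 → ∀ τ : ℂ, 0 < τ.im →
      E2 (((a : ℂ) * τ + (b : ℂ)) / ((c : ℂ) * τ + (d : ℂ))) =
        ((c : ℂ) * τ + (d : ℂ)) ^ 2 * E2 τ +
          (6 / (↑Real.pi * I)) * (c : ℂ) * ((c : ℂ) * τ + (d : ℂ)))
    (a b c d : ℤ) (hdet : a * d - b * c = 1) (τ : ℂ) (hτ : 0 < τ.im) :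
    (PowerSeries.mk fun n =>
        phi1Coeff E2 (((a : ℂ) * τ + (b : ℂ)) / ((c : ℂ) * τ + (d : ℂ))) n *
          (((c : ℂ) * τ + (d : ℂ)) ^ 2)⁻¹ ^ n)
      = (PowerSeries.mk fun n =>
          (((c : ℂ) / ((c : ℂ) * τ + (d : ℂ))) * (1 / (2 * ↑Real.pi * I))) ^ n /
            (n.factorial : ℂ)) *
        (PowerSeries.mk fun n => phi1Coeff E2 τ n) := by
  have hj : Stmt15.jf c d τ ≠ 0 := Stmt15.jf_ne hdet hτ
  have hE2γ : ∀ σ : ℂ, 0 < σ.im → E2 (Stmt15.gf a b c d σ) =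
      (Stmt15.jf c d σ)^2 * E2 σ + (6/((Real.pi:ℂ)*I)) * (c:ℂ) * Stmt15.jf c d σ :=
    fun σ hσ => hE2 a b c d hdet σ hσ
  have hkey := Stmt15.key E2 hE2d a b c d hdet hE2γ
  show (PowerSeries.mk fun n =>
        phi1Coeff E2 (Stmt15.gf a b c d τ) n * (((Stmt15.jf c d τ)^2)⁻¹)^n)
      = (PowerSeries.mk fun n => (Stmt15.uf c d τ)^n / (n.factorial : ℂ)) *
        (PowerSeries.mk fun n => phi1Coeff E2 τ n)
  apply PowerSeries.ext
  intro n
  rw [PowerSeries.coeff_mk, PowerSeries.coeff_mul,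
    Finset.Nat.sum_antidiagonal_eq_sum_range_succ_mk]
  simp only [PowerSeries.coeff_mk]
  cases n with
  | zero => simp [phi1Coeff]
  | succ m =>
    -- LHS rewrite via key
    have lhs_eq : phi1Coeff E2 (Stmt15.gf a b c d τ) (m+1) * (((Stmt15.jf c d τ)^2)⁻¹)^(m+1)
        = ((∑ k ∈ Finset.range (m+1),
              Stmt15.Cc m k * (Stmt15.uf c d τ)^(m-k) * Dop^[k] E2 τ)
            + 12*(m.factorial:ℂ)*(Stmt15.uf c d τ)^(m+1))
          / (12*((m+1).factorial:ℂ)*(m.factorial:ℂ)) := by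
      rw [phi1Coeff, if_neg (Nat.succ_ne_zero m)]
      have hm1 : m+1-1 = m := rfl
      rw [hm1, hkey m τ hτ]
      have hjj : (Stmt15.jf c d τ)^(2*m+2) * (((Stmt15.jf c d τ)^2)⁻¹)^(m+1) = 1 := by
        rw [inv_pow, ← pow_mul, show 2*(m+1) = 2*m+2 from by ring]
        exact mul_inv_cancel₀ (pow_ne_zero _ hj)
      calc (Stmt15.jf c d τ)^(2*m+2) *
            ((∑ k ∈ Finset.range (m+1),
              Stmt15.Cc m k * (Stmt15.uf c d τ)^(m-k) * Dop^[k] E2 τ)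
              + 12*(m.factorial:ℂ)*(Stmt15.uf c d τ)^(m+1))
            / (12*((m+1).factorial:ℂ)*(m.factorial:ℂ)) * (((Stmt15.jf c d τ)^2)⁻¹)^(m+1)
          = ((∑ k ∈ Finset.range (m+1),
              Stmt15.Cc m k * (Stmt15.uf c d τ)^(m-k) * Dop^[k] E2 τ)
              + 12*(m.factorial:ℂ)*(Stmt15.uf c d τ)^(m+1))
            / (12*((m+1).factorial:ℂ)*(m.factorial:ℂ))
            * ((Stmt15.jf c d τ)^(2*m+2) * (((Stmt15.jf c d τ)^2)⁻¹)^(m+1)) := by ring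
        _ = _ := by rw [hjj, mul_one]
    rw [lhs_eq]
    -- split the LHS fraction
    rw [add_div, Finset.sum_div]
    have hcst : 12*(m.factorial:ℂ)*(Stmt15.uf c d τ)^(m+1) / (12*((m+1).factorial:ℂ)*(m.factorial:ℂ))
        = (Stmt15.uf c d τ)^(m+1)/(((m+1).factorial:ℕ):ℂ) := by
      rw [div_eq_div_iff (Stmt15.D1_ne m) (Stmt15.fact_ne (m+1))]
      ring
    rw [hcst]
    -- RHS: peel off the last term and reflect
    rw [Finset.sum_range_succ
        (fun k => (Stmt15.uf c d τ)^k/((k.factorial:ℕ):ℂ) * phi1Coeff E2 τ (m+1-k)) (m+1),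
      show m+1-(m+1) = 0 from Nat.sub_self (m+1),
      show phi1Coeff E2 τ 0 = 1 from rfl, mul_one]
    rw [← Finset.sum_range_reflect
      (fun k => (Stmt15.uf c d τ)^k/((k.factorial:ℕ):ℂ) * phi1Coeff E2 τ (m+1-k)) (m+1)]
    congr 1
    apply Finset.sum_congr rfl
    intro k hk
    have hkm : k ≤ m := Nat.lt_succ_iff.mp (Finset.mem_range.mp hk)
    simp only [Nat.add_sub_cancel]
    rw [show m+1-(m-k) = k+1 from by omega]
    rw [phi1Coeff, if_neg (Nat.succ_ne_zero k)]
    rw [show k+1-1 = k from rfl]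
    exact Stmt15.final_term m k (Stmt15.uf c d τ) (Dop^[k] E2 τ)
end
end

section
/- Let R be a commutative ℚ-algebra with a derivation D and distinguished elements e₂, e₄ satisfying D(e₂) = (e₂² - e₄)/12. Define for a ∈ R and integer k: ∂_k(a) = D(a) - (k/12)e₂a, and recursively ∂_k^{[0]}a = a, ∂_k^{[1]}a = ∂_k a, ∂_k^{[n+1]}a = ∂_{k+2n}(∂_k^{[n]}a) - (n(n+k-1)/144)·e₄·∂_k^{[n-1]}a. Then the generating-series identity Σ_{n≥0} ∂_k^{[n]}(a)·X^n/(n!(k)_n) = exp(-X e₂/12)·Σ_{n≥0} D^n(a)·X^n/(n!(k)_n) holds in R[[X]] whenever k is a positive integer (so (k)_n ≠ 0). -/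
/-!
Put `E = -e₂/12`, so that the Ramanujan relation reads `D E = e₄/144 - E²`, and let `cₙ` be the
coefficients of `exp (E X) · Σ Dⁿa Xⁿ/(n! (k)ₙ)`. Then `n! (k)ₙ cₙ` satisfies the defining
recursion of `∂_k^{[n]} a`, i.e. `(n+2)(k+n+1) c_{n+2} = D c_{n+1} + (k+2n+2) E c_{n+1} - e₄/144 · cₙ`.
To see this, split `(n+2)(k+n+1) = (k+2n+2) i - i(i-1) + j(k+j-1)` on `i + j = n + 2`:
since `i · Eⁱ/i! = E · Eⁱ⁻¹/(i-1)!` the first two parts give `(k+2n+2) E c_{n+1} - E² cₙ`, the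
last one gives the terms of `D c_{n+1}` where `D` hits the second factor, and the terms where `D`
hits `Eⁱ/i!` sum to `D E · cₙ = e₄/144 · cₙ - E² cₙ`.
-/

open Finset

noncomputable section

/-- Rising factorial `k (k+1) ⋯ (k+n-1)` in `ℚ`. -/
def risingQ (k : ℕ) (n : ℕ) : ℚ := ∏ i ∈ Finset.range n, ((k : ℚ) + i)

/-- The abstract canonical higher Serre derivatives in a commutative `ℚ`-algebra `R` with a
derivation `D` and distinguished elements `e₂, e₄`:
`∂_k^{[0]}a = a`, `∂_k^{[1]}a = D a - (k/12)e₂a`,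
`∂_k^{[n+2]}a = ∂_{k+2(n+1)}(∂_k^{[n+1]}a) - ((n+1)(n+k)/144)·e₄·∂_k^{[n]}a`. -/
def higherSerreA {R : Type*} [CommRing R] [Algebra ℚ R]
    (D : R → R) (e2 e4 : R) (k : ℚ) (a : R) : ℕ → R
  | 0 => a
  | 1 => D a - (k / 12) • (e2 * a)
  | (n + 2) =>
      (D (higherSerreA D e2 e4 k a (n + 1)) -
          ((k + 2 * ((n : ℚ) + 1)) / 12) • (e2 * higherSerreA D e2 e4 k a (n + 1))) -
        ((((n : ℚ) + 1) * (((n : ℚ) + 1) + k - 1) / 144) : ℚ) •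
          (e4 * higherSerreA D e2 e4 k a n)

lemma risingQ_succ (k n : ℕ) : risingQ k (n + 1) = risingQ k n * ((k : ℚ) + n) :=
  prod_range_succ _ _

lemma risingQ_pos {k : ℕ} (hk : 0 < k) (n : ℕ) : 0 < risingQ k n :=
  prod_pos fun i _ => by positivity

section

variable {R : Type*} [CommRing R] [Algebra ℚ R]

def expCoeff (E : R) (n : ℕ) : R := ((1 : ℚ) / n.factorial) • E ^ n

def risingIterCoeff (D : Derivation ℚ R R) (k : ℕ) (a : R) (n : ℕ) : R :=
  ((1 : ℚ) / ((n.factorial : ℚ) * risingQ k n)) • (⇑D)^[n] a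

def productCoeff (D : Derivation ℚ R R) (E : R) (k : ℕ) (a : R) (n : ℕ) : R :=
  ∑ p ∈ antidiagonal n, expCoeff E p.1 * risingIterCoeff D k a p.2

lemma expCoeff_zero (E : R) : expCoeff E 0 = 1 := by simp [expCoeff]

lemma expCoeff_one (E : R) : expCoeff E 1 = E := by simp [expCoeff]

lemma natCast_succ_smul_expCoeff_succ (E : R) (n : ℕ) :
    ((n : ℚ) + 1) • expCoeff E (n + 1) = E * expCoeff E n := by
  simp only [expCoeff, smul_smul, Nat.factorial_succ, mul_smul_comm, ← pow_succ']
  congr 1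
  push_cast
  field_simp

lemma map_expCoeff_succ (D : Derivation ℚ R R) (E : R) (n : ℕ) :
    D (expCoeff E (n + 1)) = expCoeff E n * D E := by
  rw [expCoeff, expCoeff, D.map_smul, D.leibniz_pow, Nat.add_sub_cancel,
    ← Nat.cast_smul_eq_nsmul ℚ, smul_smul, smul_eq_mul, smul_mul_assoc]
  congr 1
  rw [Nat.factorial_succ]
  push_cast
  field_simp

lemma map_expCoeff_zero (D : Derivation ℚ R R) (E : R) : D (expCoeff E 0) = 0 := by
  rw [expCoeff_zero, D.map_one_eq_zero]

lemma risingIterCoeff_zero (D : Derivation ℚ R R) (k : ℕ) (a : R) :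
    risingIterCoeff D k a 0 = a := by
  simp [risingIterCoeff, risingQ]

lemma risingIterCoeff_one (D : Derivation ℚ R R) (k : ℕ) (a : R) :
    risingIterCoeff D k a 1 = ((1 : ℚ) / k) • D a := by
  simp [risingIterCoeff, risingQ]

lemma map_risingIterCoeff (D : Derivation ℚ R R) {k : ℕ} (hk : 0 < k) (a : R) (n : ℕ) :
    D (risingIterCoeff D k a n) =
      (((n : ℚ) + 1) * (k + n)) • risingIterCoeff D k a (n + 1) := by
  have hrising := (risingQ_pos hk n).ne'
  rw [risingIterCoeff, risingIterCoeff, D.map_smul, ← Function.iterate_succ_apply' (⇑D),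
    smul_smul, risingQ_succ, Nat.factorial_succ]
  congr 1
  push_cast
  field_simp

lemma sum_antidiagonal_succ_map_expCoeff_mul (D : Derivation ℚ R R) (E : R) (w : ℕ → R)
    (n : ℕ) :
    ∑ p ∈ antidiagonal (n + 1), D (expCoeff E p.1) * w p.2 =
      D E * ∑ p ∈ antidiagonal n, expCoeff E p.1 * w p.2 := by
  simp only [Nat.sum_antidiagonal_succ, map_expCoeff_zero, zero_mul, zero_add,
    map_expCoeff_succ, mul_sum]
  exact sum_congr rfl fun p _ => by ring

lemma sum_antidiagonal_succ_natCast_mul_smul_expCoeff_mul (E : R) (w : ℕ → R) (g : ℕ → ℚ)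
    (n : ℕ) :
    ∑ p ∈ antidiagonal (n + 1), ((p.1 : ℚ) * g p.1) • (expCoeff E p.1 * w p.2) =
      E * ∑ p ∈ antidiagonal n, g (p.1 + 1) • (expCoeff E p.1 * w p.2) := by
  simp only [Nat.sum_antidiagonal_succ, Nat.cast_zero, zero_mul, zero_smul, zero_add, mul_sum]
  refine sum_congr rfl fun p _ => ?_
  rw [mul_comm, mul_smul, ← smul_mul_assoc, Nat.cast_succ, natCast_succ_smul_expCoeff_succ]
  simp only [mul_smul_comm, mul_assoc]

lemma sum_antidiagonal_succ_smul_mul_risingIterCoeff (D : Derivation ℚ R R) {k : ℕ}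
    (hk : 0 < k) (a : R) (w : ℕ → R) (n : ℕ) :
    ∑ p ∈ antidiagonal (n + 1),
        ((p.2 : ℚ) * (k + p.2 - 1)) • (w p.1 * risingIterCoeff D k a p.2) =
      ∑ p ∈ antidiagonal n, w p.1 * D (risingIterCoeff D k a p.2) := by
  simp only [Nat.sum_antidiagonal_succ', Nat.cast_zero, zero_mul, zero_smul, zero_add,
    map_risingIterCoeff D hk, mul_smul_comm]
  refine sum_congr rfl fun p _ => ?_
  congr 1
  push_cast
  ring

lemma productCoeff_zero (D : Derivation ℚ R R) (E : R) (k : ℕ) (a : R) :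
    productCoeff D E k a 0 = a := by
  simp [productCoeff, expCoeff_zero, risingIterCoeff_zero]

lemma productCoeff_one (D : Derivation ℚ R R) (E : R) (k : ℕ) (a : R) :
    productCoeff D E k a 1 = ((1 : ℚ) / k) • D a + E * a := by
  simp [productCoeff, Nat.sum_antidiagonal_succ, expCoeff_zero, expCoeff_one,
    risingIterCoeff_zero, risingIterCoeff_one]

lemma map_productCoeff (D : Derivation ℚ R R) (E : R) (k : ℕ) (a : R) (n : ℕ) :
    D (productCoeff D E k a n) =
      ∑ p ∈ antidiagonal n, D (expCoeff E p.1) * risingIterCoeff D k a p.2 +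
        ∑ p ∈ antidiagonal n, expCoeff E p.1 * D (risingIterCoeff D k a p.2) := by
  simp only [productCoeff, map_sum, Derivation.leibniz, smul_eq_mul, ← sum_add_distrib]
  exact sum_congr rfl fun p _ => by ring

lemma productCoeff_succ_succ (D : Derivation ℚ R R) {E e4 : R}
    (hE : D E = ((1 : ℚ) / 144) • e4 - E ^ 2) {k : ℕ} (hk : 0 < k) (a : R) (m : ℕ) :
    (((m : ℚ) + 2) * (k + m + 1)) • productCoeff D E k a (m + 2) =
      D (productCoeff D E k a (m + 1)) +
        ((k : ℚ) + 2 * m + 2) • (E * productCoeff D E k a (m + 1)) -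
        ((1 : ℚ) / 144) • (e4 * productCoeff D E k a m) := by
  have hsplit : (((m : ℚ) + 2) * (k + m + 1)) • productCoeff D E k a (m + 2) =
      ((k : ℚ) + 2 * m + 2) • ∑ p ∈ antidiagonal (m + 1 + 1),
          (p.1 : ℚ) • (expCoeff E p.1 * risingIterCoeff D k a p.2) -
        ∑ p ∈ antidiagonal (m + 1 + 1),
          ((p.1 : ℚ) * (p.1 - 1)) • (expCoeff E p.1 * risingIterCoeff D k a p.2) +
        ∑ p ∈ antidiagonal (m + 1 + 1),
          ((p.2 : ℚ) * (k + p.2 - 1)) • (expCoeff E p.1 * risingIterCoeff D k a p.2) := by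
    rw [productCoeff, smul_sum, smul_sum, ← sum_sub_distrib, ← sum_add_distrib]
    refine sum_congr rfl fun p hp => ?_
    have hij : (p.1 : ℚ) + p.2 = m + 2 := by exact_mod_cast mem_antidiagonal.1 hp
    rw [smul_smul, ← sub_smul, ← add_smul]
    congr 1
    linear_combination (-(k : ℚ) - m - 1 - p.2 + p.1) * hij
  have hi₂ := sum_antidiagonal_succ_natCast_mul_smul_expCoeff_mul E (risingIterCoeff D k a)
    (fun _ => 1) (m + 1)
  have hii := sum_antidiagonal_succ_natCast_mul_smul_expCoeff_mul E (risingIterCoeff D k a)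
    (fun i => (i : ℚ) - 1) (m + 1)
  have hi₁ := sum_antidiagonal_succ_natCast_mul_smul_expCoeff_mul E (risingIterCoeff D k a)
    (fun _ => 1) m
  simp only [one_smul, mul_one, Nat.cast_succ, add_sub_cancel_right] at hi₂ hii hi₁
  rw [hsplit, hi₂, hii, hi₁, sum_antidiagonal_succ_smul_mul_risingIterCoeff D hk a,
    map_productCoeff, sum_antidiagonal_succ_map_expCoeff_mul, hE]
  simp only [productCoeff, sub_mul, smul_mul_assoc, pow_two, mul_assoc]
  module

lemma map_neg_twelfth_smul_of_ramanujan (D : Derivation ℚ R R) {e2 e4 : R}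
    (hRam : D e2 = ((1 : ℚ) / 12) • (e2 ^ 2 - e4)) :
    D ((-((1 : ℚ) / 12)) • e2) = ((1 : ℚ) / 144) • e4 - ((-((1 : ℚ) / 12)) • e2) ^ 2 := by
  rw [D.map_smul, hRam, smul_pow]
  module

lemma higherSerreA_eq_smul_productCoeff (D : Derivation ℚ R R) {e2 e4 : R}
    (hRam : D e2 = ((1 : ℚ) / 12) • (e2 ^ 2 - e4)) {k : ℕ} (hk : 0 < k) (a : R) :
    ∀ n, higherSerreA (⇑D) e2 e4 (k : ℚ) a n =
      ((n.factorial : ℚ) * risingQ k n) • productCoeff D ((-((1 : ℚ) / 12)) • e2) k a n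
  | 0 => by simp [higherSerreA, productCoeff_zero, risingQ]
  | 1 => by
    have hk' : (k : ℚ) ≠ 0 := by positivity
    have hN : ((Nat.factorial 1 : ℚ) * risingQ k 1) = k := by simp [risingQ]
    rw [higherSerreA, productCoeff_one, hN, smul_add, smul_smul, mul_one_div_cancel hk',
      one_smul, smul_mul_assoc]
    module
  | n + 2 => by
    have hN₁ : ((n + 1).factorial : ℚ) * risingQ k (n + 1) =
        ((n : ℚ) + 1) * (k + n) * ((n.factorial : ℚ) * risingQ k n) := by
      rw [Nat.factorial_succ, risingQ_succ]
      push_cast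
      ring
    have hN₂ : ((n + 2).factorial : ℚ) * risingQ k (n + 2) =
        ((n + 1).factorial : ℚ) * risingQ k (n + 1) * (((n : ℚ) + 2) * (k + n + 1)) := by
      rw [Nat.factorial_succ (n + 1), risingQ_succ k (n + 1)]
      push_cast
      ring
    have hrec := productCoeff_succ_succ D (map_neg_twelfth_smul_of_ramanujan D hRam) hk a n
    rw [higherSerreA, higherSerreA_eq_smul_productCoeff D hRam hk a (n + 1),
      higherSerreA_eq_smul_productCoeff D hRam hk a n, hN₂,
      mul_smul (((n + 1).factorial : ℚ) * risingQ k (n + 1)), hrec, D.map_smul, hN₁]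
    set E := (-((1 : ℚ) / 12)) • e2 with hE
    have he2 : e2 = (-12 : ℚ) • E := by rw [hE, smul_smul]; norm_num
    rw [he2]
    simp only [smul_mul_assoc, mul_smul_comm]
    module

end

/-- Let `R` be a commutative `ℚ`-algebra with a derivation `D` and elements `e₂, e₄` satisfying
`D(e₂) = (e₂² - e₄)/12`.  Then for every positive integer `k` the generating-series identity
`Σ_{n≥0} ∂_k^{[n]}(a)·Xⁿ/(n!(k)_n) = exp(-X e₂/12)·Σ_{n≥0} Dⁿ(a)·Xⁿ/(n!(k)_n)`
holds in `R⟦X⟧`. -/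
theorem statement17 {R : Type*} [CommRing R] [Algebra ℚ R]
    (D : Derivation ℚ R R) (e2 e4 : R)
    (hRam : D e2 = ((1 : ℚ) / 12) • (e2 ^ 2 - e4))
    (k : ℕ) (hk : 0 < k) (a : R) :
    (PowerSeries.mk fun n =>
        ((1 : ℚ) / ((n.factorial : ℚ) * risingQ k n)) • higherSerreA (⇑D) e2 e4 (k : ℚ) a n)
      = (PowerSeries.mk fun n =>
          ((1 : ℚ) / (n.factorial : ℚ)) • ((-((1 : ℚ) / 12)) • e2) ^ n) *
        (PowerSeries.mk fun n =>
          ((1 : ℚ) / ((n.factorial : ℚ) * risingQ k n)) • (⇑D)^[n] a) := by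
  ext n
  have hN : (n.factorial : ℚ) * risingQ k n ≠ 0 :=
    mul_ne_zero (Nat.cast_ne_zero.2 n.factorial_ne_zero) (risingQ_pos hk n).ne'
  rw [PowerSeries.coeff_mul, PowerSeries.coeff_mk, higherSerreA_eq_smul_productCoeff D hRam hk,
    smul_smul, one_div_mul_cancel hN, one_smul]
  simp only [PowerSeries.coeff_mk]
  rfl
end
end
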